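/- arXiv:2005.07165 — 3 statements merged into one kernel-verified Lean document; each statement's English description precedes it below -/
import Mathlib

section
/- For smooth positive scalar field ρ on the torus, the quantum Bohm potential identity holds: ρ ∇(Δ√ρ / √ρ) = (1/2) div(ρ ∇∇ log ρ), i.e. for each component j, ρ ∂_j(Δ√ρ/√ρ) = (1/2) Σ_i ∂_i(ρ ∂_i∂_j log ρ). -/
open MeasureTheory Real Filter

noncomputable section

/-- Partial derivative in direction `i` of a scalar field on `ℝ^d`. -/
def pd {d : ℕ} (i : Fin d) (f : (Fin d → ℝ) → ℝ) (x : Fin d → ℝ) : ℝ :=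
  fderiv ℝ f x (Pi.single i 1)

/-- Laplacian of a scalar field on `ℝ^d`. -/
def lap {d : ℕ} (f : (Fin d → ℝ) → ℝ) (x : Fin d → ℝ) : ℝ :=
  ∑ i, pd i (pd i f) x

/-- Fundamental domain of the torus `𝕋^d = ℝ^d / ℤ^d`. -/
def box (d : ℕ) : Set (Fin d → ℝ) := Set.univ.pi fun _ => Set.Icc 0 1

/- ### Auxiliary calculus lemmas for `pd` -/

private lemma pd_contDiff {d : ℕ} (i : Fin d) {f : (Fin d → ℝ) → ℝ}
    (hf : ContDiff ℝ (⊤ : ℕ∞) f) : ContDiff ℝ (⊤ : ℕ∞) (pd i f) := by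
  have h := (contDiff_infty_iff_fderiv.mp hf).2
  unfold pd
  exact h.clm_apply contDiff_const

private lemma cd_diff {d : ℕ} {f : (Fin d → ℝ) → ℝ}
    (hf : ContDiff ℝ (⊤ : ℕ∞) f) (y : Fin d → ℝ) : DifferentiableAt ℝ f y :=
  hf.differentiable (by simp) y

private lemma pd_mul {d : ℕ} (i : Fin d) {f g : (Fin d → ℝ) → ℝ} {x : Fin d → ℝ}
    (hf : DifferentiableAt ℝ f x) (hg : DifferentiableAt ℝ g x) :
    pd i (fun y => f y * g y) x = pd i f x * g x + f x * pd i g x := by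
  unfold pd
  rw [fderiv_fun_mul hf hg]
  simp only [ContinuousLinearMap.add_apply, ContinuousLinearMap.smul_apply, smul_eq_mul]
  ring

private lemma pd_const_mul {d : ℕ} (i : Fin d) {f : (Fin d → ℝ) → ℝ} {x : Fin d → ℝ}
    (hf : DifferentiableAt ℝ f x) (c : ℝ) :
    pd i (fun y => c * f y) x = c * pd i f x := by
  unfold pd
  rw [fderiv_const_mul hf c]
  simp

private lemma pd_sub {d : ℕ} (i : Fin d) {f g : (Fin d → ℝ) → ℝ} {x : Fin d → ℝ}
    (hf : DifferentiableAt ℝ f x) (hg : DifferentiableAt ℝ g x) :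
    pd i (fun y => f y - g y) x = pd i f x - pd i g x := by
  unfold pd
  rw [fderiv_fun_sub hf hg]
  simp

private lemma pd_sum {d n : ℕ} (i : Fin d) {F : Fin n → (Fin d → ℝ) → ℝ} {x : Fin d → ℝ}
    (hF : ∀ k, DifferentiableAt ℝ (F k) x) :
    pd i (fun y => ∑ k, F k y) x = ∑ k, pd i (F k) x := by
  unfold pd
  rw [fderiv_fun_sum fun k _ => hF k]
  simp

private lemma pd_log {d : ℕ} (i : Fin d) {f : (Fin d → ℝ) → ℝ} {x : Fin d → ℝ}
    (hf : DifferentiableAt ℝ f x) (hx : f x ≠ 0) :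
    pd i (fun y => Real.log (f y)) x = pd i f x / f x := by
  unfold pd
  rw [(hf.hasFDerivAt.log hx).fderiv]
  simp [div_eq_inv_mul]

private lemma pd_inv {d : ℕ} (i : Fin d) {g : (Fin d → ℝ) → ℝ} {x : Fin d → ℝ}
    (hg : DifferentiableAt ℝ g x) (hx : g x ≠ 0) :
    pd i (fun y => (g y)⁻¹) x = -pd i g x / g x ^ 2 := by
  unfold pd
  have : (fun y => (g y)⁻¹) = Inv.inv ∘ g := rfl
  rw [this, fderiv_comp x (differentiableAt_inv hx) hg, fderiv_inv' hx]
  simp only [ContinuousLinearMap.comp_apply, ContinuousLinearMap.neg_apply,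
    ContinuousLinearMap.mulLeftRight_apply]
  field_simp

private lemma pd_div {d : ℕ} (i : Fin d) {f g : (Fin d → ℝ) → ℝ} {x : Fin d → ℝ}
    (hf : DifferentiableAt ℝ f x) (hg : DifferentiableAt ℝ g x) (hx : g x ≠ 0) :
    pd i (fun y => f y / g y) x = (pd i f x * g x - f x * pd i g x) / g x ^ 2 := by
  have h1 : (fun y => f y / g y) = fun y => f y * (g y)⁻¹ := by
    funext y; rw [div_eq_mul_inv]
  rw [h1, pd_mul i (g := fun y => (g y)⁻¹) hf (hg.inv hx), pd_inv i hg hx]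
  field_simp [hx]
  ring

private lemma pd_comm {d : ℕ} {f : (Fin d → ℝ) → ℝ}
    (hf : ContDiff ℝ (⊤ : ℕ∞) f) (a b : Fin d) (x : Fin d → ℝ) :
    pd a (pd b f) x = pd b (pd a f) x := by
  have hdf : ContDiff ℝ (⊤ : ℕ∞) (fderiv ℝ f) := (contDiff_infty_iff_fderiv.mp hf).2
  have hd2 : DifferentiableAt ℝ (fderiv ℝ f) x := hdf.differentiable (by simp) x
  have key : ∀ v w : Fin d → ℝ, fderiv ℝ (fun y => fderiv ℝ f y v) x w
      = fderiv ℝ (fderiv ℝ f) x w v := by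
    intro v w
    rw [fderiv_clm_apply hd2 (differentiableAt_const v)]
    simp
  have symm := second_derivative_symmetric (f := f) (f' := fderiv ℝ f)
      (f'' := fderiv ℝ (fderiv ℝ f) x)
      (fun y => (cd_diff hf y).hasFDerivAt) hd2.hasFDerivAt
  unfold pd
  rw [key, key, symm]

/-- Main computation, phrased for `ρ = s²` with `s` smooth and positive. -/
private lemma bohm_key {d : ℕ} (s : (Fin d → ℝ) → ℝ)
    (hs : ContDiff ℝ (⊤ : ℕ∞) s) (hsp : ∀ y, 0 < s y) (x : Fin d → ℝ) (j : Fin d) :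
    (s x * s x) * pd j (fun y => lap s y / s y) x
      = (1 / 2) * ∑ i, pd i (fun y =>
          (s y * s y) * pd i (fun z => pd j (fun w => Real.log (s w * s w)) z) y) x := by
  have hu : ContDiff ℝ (⊤ : ℕ∞) (pd j s) := pd_contDiff j hs
  -- Step 1: the gradient of the log
  have h1 : (fun z => pd j (fun w => Real.log (s w * s w)) z)
      = fun z => (2 * pd j s z) / s z := by
    funext z
    have hlog : (fun w => Real.log (s w * s w)) = fun w => 2 * Real.log (s w) := by
      funext w
      rw [Real.log_mul (hsp w).ne' (hsp w).ne']
      ring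
    rw [hlog, pd_const_mul j ((cd_diff hs z).log (hsp z).ne') 2,
      pd_log j (cd_diff hs z) (hsp z).ne', mul_div_assoc]
  -- Step 2: ρ ∂ᵢ∂ⱼ log ρ = 2 (s ∂ᵢ∂ⱼs − ∂ⱼs ∂ᵢs)
  have hinner : ∀ i : Fin d,
      (fun y => (s y * s y) * pd i (fun z => pd j (fun w => Real.log (s w * s w)) z) y)
        = fun y => 2 * (s y * pd i (pd j s) y) - 2 * (pd j s y * pd i s y) := by
    intro i
    funext y
    simp only [h1]
    rw [pd_div i ((cd_diff hu y).const_mul 2) (cd_diff hs y) (hsp y).ne',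
      pd_const_mul i (cd_diff hu y) 2]
    field_simp [(hsp y).ne']
  simp only [hinner]
  -- Step 3: outer derivative of each summand
  have houter : ∀ i : Fin d,
      pd i (fun y => 2 * (s y * pd i (pd j s) y) - 2 * (pd j s y * pd i s y)) x
        = 2 * (s x * pd i (pd i (pd j s)) x) - 2 * (pd j s x * pd i (pd i s) x) := by
    intro i
    rw [pd_sub i (f := fun y => 2 * (s y * pd i (pd j s) y))
          (g := fun y => 2 * (pd j s y * pd i s y)) (((cd_diff hs x).mul (cd_diff (pd_contDiff i hu) x)).const_mul 2)
        (((cd_diff hu x).mul (cd_diff (pd_contDiff i hs) x)).const_mul 2),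
      pd_const_mul i (f := fun y => s y * pd i (pd j s) y) ((cd_diff hs x).mul (cd_diff (pd_contDiff i hu) x)) 2,
      pd_const_mul i (f := fun y => pd j s y * pd i s y) ((cd_diff hu x).mul (cd_diff (pd_contDiff i hs) x)) 2,
      pd_mul i (cd_diff hs x) (cd_diff (pd_contDiff i hu) x),
      pd_mul i (cd_diff hu x) (cd_diff (pd_contDiff i hs) x)]
    ring
  have hsum : ∑ i, pd i (fun y => 2 * (s y * pd i (pd j s) y) - 2 * (pd j s y * pd i s y)) x
      = 2 * (s x * ∑ i, pd i (pd i (pd j s)) x) - 2 * (pd j s x * ∑ i, pd i (pd i s) x) := by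
    rw [Finset.sum_congr rfl fun i _ => houter i, Finset.sum_sub_distrib]
    simp only [← Finset.mul_sum]
  rw [hsum]
  -- Step 4: the left-hand side
  have hlapc : ContDiff ℝ (⊤ : ℕ∞) (lap s) := by
    have : lap s = fun y => ∑ i, pd i (pd i s) y := rfl
    rw [this]
    exact ContDiff.sum fun i _ => pd_contDiff i (pd_contDiff i hs)
  rw [pd_div j (cd_diff hlapc x) (cd_diff hs x) (hsp x).ne']
  have hswap : pd j (lap s) x = ∑ i, pd i (pd i (pd j s)) x := by
    have hl : lap s = fun y => ∑ i, pd i (pd i s) y := rfl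
    rw [hl, pd_sum j fun i => cd_diff (pd_contDiff i (pd_contDiff i hs)) x]
    refine Finset.sum_congr rfl fun i _ => ?_
    rw [pd_comm (pd_contDiff i hs) j i x]
    have : pd j (pd i s) = pd i (pd j s) := funext fun y => pd_comm hs j i y
    rw [this]
  rw [hswap]
  have hlapx : lap s x = ∑ i, pd i (pd i s) x := rfl
  rw [hlapx]
  field_simp [(hsp x).ne']

/-- Quantum Bohm potential identity: for smooth positive `ρ` on the torus,
`ρ ∇(Δ√ρ/√ρ) = (1/2) div(ρ ∇∇ log ρ)` componentwise. -/
theorem bohm_potential_identity {d : ℕ} (ρ : (Fin d → ℝ) → ℝ)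
    (hρ : ContDiff ℝ (⊤ : ℕ∞) ρ) (hpos : ∀ x, 0 < ρ x)
    (hper : ∀ x k, ρ (x + Pi.single k 1) = ρ x) :
    ∀ (x : Fin d → ℝ) (j : Fin d),
      ρ x * pd j (fun y => lap (fun z => Real.sqrt (ρ z)) y / Real.sqrt (ρ y)) x
        = (1 / 2) *
          ∑ i, pd i (fun y =>
            ρ y * pd i (fun z => pd j (fun w => Real.log (ρ w)) z) y) x := by
  intro x j
  have hρ' : ContDiff ℝ (⊤ : ℕ∞) ρ := hρ.of_le (by simp)
  set s : (Fin d → ℝ) → ℝ := fun z => Real.sqrt (ρ z) with hs_def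
  have hsp : ∀ y, 0 < s y := fun y => Real.sqrt_pos.2 (hpos y)
  have hs : ContDiff ℝ (⊤ : ℕ∞) s := contDiff_iff_contDiffAt.2 fun y =>
    (contDiffAt_sqrt (hpos y).ne').comp y hρ'.contDiffAt
  have hρeq : ρ = fun y => s y * s y := funext fun y => (Real.mul_self_sqrt (hpos y).le).symm
  have hsq : ∀ z : Fin d → ℝ, Real.sqrt (s z * s z) = s z := fun z =>
    Real.sqrt_mul_self (hsp z).le
  rw [hρeq]
  simp only [hsq]
  exact bohm_key s hs hsp x j
end
end

section
/- Let (ρ, u) be smooth with ρ > 0 solving the continuity equation ∂_t ρ + div(ρu) = 0 on the torus. Then the following integral identity holds: (1/2) d/dt ∫ ρ|∇ log ρ|² dx + ∫ ∇div u · ∇ρ dx + ∫ ρ D(u) : (∇log ρ ⊗ ∇log ρ) dx = 0, where D(u) = (∇u + ∇ᵗu)/2. -/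
open MeasureTheory Real Filter

noncomputable section

namespace CeAux

variable {d : ℕ}

abbrev E (d : ℕ) := Fin d → ℝ
abbrev P (d : ℕ) := ℝ × E d

/-- directional derivative -/
def dv (v : P d) (F : P d → ℝ) (p : P d) : ℝ := fderiv ℝ F p v

def pt (F : P d → ℝ) : P d → ℝ := dv (1, 0) F
def px (i : Fin d) (F : P d → ℝ) : P d → ℝ := dv (0, Pi.single i 1) F

variable {F G : P d → ℝ} {v : P d} {p : P d}

theorem contDiff_dv (hF : ContDiff ℝ (⊤ : ℕ∞) F) : ContDiff ℝ (⊤ : ℕ∞) (dv v F) :=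
  (hF.fderiv_right (by simp)).clm_apply contDiff_const

theorem dv_add (hF : DifferentiableAt ℝ F p) (hG : DifferentiableAt ℝ G p) :
    dv v (fun q => F q + G q) p = dv v F p + dv v G p := by
  simp [dv, fderiv_fun_add hF hG]

theorem dv_mul (hF : DifferentiableAt ℝ F p) (hG : DifferentiableAt ℝ G p) :
    dv v (fun q => F q * G q) p = dv v F p * G p + F p * dv v G p := by
  simp [dv, fderiv_fun_mul hF hG]; ring

theorem dv_neg : dv v (fun q => -F q) p = -dv v F p := by
  simp [dv, fderiv_neg]

theorem dv_const (c : ℝ) : dv v (fun _ => c) p = 0 := by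
  simp [dv]

theorem dv_sum {ι : Type*} (s : Finset ι) (A : ι → P d → ℝ)
    (h : ∀ i ∈ s, DifferentiableAt ℝ (A i) p) :
    dv v (fun q => ∑ i ∈ s, A i q) p = ∑ i ∈ s, dv v (A i) p := by
  simp [dv, fderiv_fun_sum h]

theorem dv_sq (hF : DifferentiableAt ℝ F p) :
    dv v (fun q => F q ^ 2) p = 2 * F p * dv v F p := by
  have : dv v (fun q => F q * F q) p = dv v F p * F p + F p * dv v F p := dv_mul hF hF
  simp only [← sq] at this
  rw [this]; ring

theorem dv_log (hF : DifferentiableAt ℝ F p) (h0 : F p ≠ 0) :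
    dv v (fun q => Real.log (F q)) p = (F p)⁻¹ * dv v F p := by
  have h : HasFDerivAt (fun q => Real.log (F q)) ((F p)⁻¹ • fderiv ℝ F p) p :=
    (Real.hasDerivAt_log h0).comp_hasFDerivAt p hF.hasFDerivAt
  simp [dv, h.fderiv, smul_eq_mul]

/-- symmetry of second directional derivatives -/
theorem dv_comm (hF : ContDiff ℝ (⊤ : ℕ∞) F) (v w : P d) (p : P d) :
    dv v (dv w F) p = dv w (dv v F) p := by
  have hdiff : ∀ q, HasFDerivAt F (fderiv ℝ F q) q := fun q =>
    (hF.differentiable (by simp) q).hasFDerivAt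
  have h2 : DifferentiableAt ℝ (fderiv ℝ F) p :=
    ((hF.fderiv_right (m := (⊤ : ℕ∞)) (by simp)).differentiable (by simp)) p
  have hsymm := second_derivative_symmetric hdiff h2.hasFDerivAt v w
  have key : ∀ z y : P d, fderiv ℝ (fun q => fderiv ℝ F q z) p y
      = fderiv ℝ (fderiv ℝ F) p y z := by
    intro z y
    have h3 : HasFDerivAt (fun q => fderiv ℝ F q z)
        ((ContinuousLinearMap.apply ℝ ℝ z).comp (fderiv ℝ (fderiv ℝ F) p)) p :=
      (ContinuousLinearMap.apply ℝ ℝ z).hasFDerivAt.comp p h2.hasFDerivAt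
    rw [h3.fderiv]; rfl
  show fderiv ℝ (fun q => fderiv ℝ F q w) p v = fderiv ℝ (fun q => fderiv ℝ F q v) p w
  rw [key, key]
  exact hsymm

variable {F : P d → ℝ} {v : P d}

theorem contDiff_slice (hF : ContDiff ℝ (⊤ : ℕ∞) F) (t : ℝ) :
    ContDiff ℝ (⊤ : ℕ∞) (fun y => F (t, y)) :=
  hF.comp (contDiff_const.prodMk contDiff_id)

theorem hasDerivAt_slice (hF : ContDiff ℝ (⊤ : ℕ∞) F) (t : ℝ) (x : E d) :
    HasDerivAt (fun s => F (s, x)) (pt F (t, x)) t := by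
  have hg : HasDerivAt (fun s : ℝ => (s, x)) ((1 : ℝ), (0 : E d)) t :=
    (hasDerivAt_id t).prodMk (hasDerivAt_const t x)
  exact ((hF.differentiable (by simp) (t, x)).hasFDerivAt).comp_hasDerivAt t hg

theorem deriv_slice (hF : ContDiff ℝ (⊤ : ℕ∞) F) (t : ℝ) (x : E d) :
    deriv (fun s => F (s, x)) t = pt F (t, x) :=
  (hasDerivAt_slice hF t x).deriv

theorem hasFDerivAt_slice_x (hF : ContDiff ℝ (⊤ : ℕ∞) F) (t : ℝ) (x : E d) :
    HasFDerivAt (fun y => F (t, y))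
      ((fderiv ℝ F (t, x)).comp (ContinuousLinearMap.inr ℝ ℝ (E d))) x := by
  have hg : HasFDerivAt (fun y : E d => ((t : ℝ), y))
      (ContinuousLinearMap.inr ℝ ℝ (E d)) x := by
    have : (fun y : E d => ((t : ℝ), y)) = fun y => ((t, 0) + ((0 : ℝ), y)) := by
      funext y; simp
    rw [this]
    exact (ContinuousLinearMap.inr ℝ ℝ (E d)).hasFDerivAt.const_add (t, 0)
  exact ((hF.differentiable (by simp) (t, x)).hasFDerivAt).comp x hg

theorem pd_slice (hF : ContDiff ℝ (⊤ : ℕ∞) F) (i : Fin d) (t : ℝ) (x : E d) :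
    pd i (fun y => F (t, y)) x = px i F (t, x) := by
  rw [pd, (hasFDerivAt_slice_x hF t x).fderiv]; rfl

theorem isCompact_box : IsCompact (box d) :=
  isCompact_univ_pi fun _ => isCompact_Icc

theorem measurableSet_box : MeasurableSet (box d) :=
  MeasurableSet.univ_pi fun _ => measurableSet_Icc

theorem hasDerivAt_integral_box (hF : ContDiff ℝ (⊤ : ℕ∞) F) (t : ℝ) :
    HasDerivAt (fun s => ∫ x in box d, F (s, x)) (∫ x in box d, pt F (t, x)) t := by
  have hptc : Continuous (pt F) := (contDiff_dv hF).continuous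
  obtain ⟨C, hC⟩ := ((isCompact_Icc (a := t - 1) (b := t + 1)).prod
    isCompact_box).exists_bound_of_continuousOn hptc.continuousOn
  have hmeas : ∀ s : ℝ, AEStronglyMeasurable (fun x => F (s, x))
      (volume.restrict (box d)) := fun s =>
    ((contDiff_slice hF s).continuous).aestronglyMeasurable
  have key := hasDerivAt_integral_of_dominated_loc_of_deriv_le
    (μ := volume.restrict (box d)) (F := fun s x => F (s, x))
    (F' := fun s x => pt F (s, x)) (bound := fun _ => C)
    (x₀ := t) (s := Metric.ball t 1) (Metric.ball_mem_nhds t one_pos)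
    (Eventually.of_forall hmeas)
    (((contDiff_slice hF t).continuous).continuousOn.integrableOn_compact isCompact_box)
    ((hptc.comp (continuous_const.prodMk continuous_id)).aestronglyMeasurable)
    ?_ ?_ ?_
  · exact key.2
  · refine ae_restrict_of_forall_mem measurableSet_box fun x hx => fun s hs => ?_
    refine hC (s, x) ⟨?_, hx⟩
    have : |s - t| < 1 := by simpa [Metric.mem_ball, Real.dist_eq] using hs
    constructor <;> [linarith [neg_le_of_abs_le this.le, neg_abs_le (s-t)];
      linarith [le_of_abs_le this.le]]
  · exact ((integrableOn_const_iff).mpr (Or.inr (isCompact_box.measure_lt_top)))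
  · exact ae_of_all _ fun x s _ => hasDerivAt_slice hF s x

theorem contDiff_pd (i : Fin d) {g : E d → ℝ} (hg : ContDiff ℝ (⊤ : ℕ∞) g) :
    ContDiff ℝ (⊤ : ℕ∞) (pd i g) :=
  (hg.fderiv_right (by simp)).clm_apply contDiff_const

def ins {n : ℕ} (i : Fin (n + 1)) (s : ℝ) (y : Fin n → ℝ) : Fin (n + 1) → ℝ :=
  i.insertNth s y

theorem insertNth_eq_line {n : ℕ} (i : Fin (n + 1)) (y : Fin n → ℝ) (s : ℝ) :
    ins i s y = ins i 0 y + s • (Pi.single i 1 : Fin (n + 1) → ℝ) := by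
  unfold ins
  funext j
  refine Fin.succAboveCases i ?_ ?_ j
  · simp
  · intro k
    simp [Pi.single_eq_of_ne (Fin.succAbove_ne i k)]

theorem continuous_insertNth' {n : ℕ} (i : Fin (n + 1)) :
    Continuous fun p : ℝ × (Fin n → ℝ) => ins i p.1 p.2 := by
  unfold ins
  refine continuous_pi fun j => ?_
  refine Fin.succAboveCases i ?_ ?_ j
  · simp only [Fin.insertNth_apply_same]; exact continuous_fst
  · intro k
    simp only [Fin.insertNth_apply_succAbove]
    exact (continuous_apply k).comp continuous_snd

theorem integral_pd_eq_zero {g : E d → ℝ} (hg : ContDiff ℝ (⊤ : ℕ∞) g)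
    (hper : ∀ x k, g (x + Pi.single k 1) = g x) (i : Fin d) :
    ∫ x in box d, pd i g x = 0 := by
  cases d with
  | zero => exact i.elim0
  | succ n =>
    set e := MeasurableEquiv.piFinSuccAbove (fun _ : Fin (n + 1) => ℝ) i with he
    have hmp : MeasurePreserving e volume (volume.prod volume) :=
      volume_preserving_piFinSuccAbove (fun _ => ℝ) i
    have hbox : box (n + 1) = e ⁻¹' ((Set.Icc (0:ℝ) 1) ×ˢ box n) := by
      ext x
      simp only [box, Set.mem_preimage, Set.mem_prod, Set.mem_pi, Set.mem_univ,
        forall_const, he, MeasurableEquiv.piFinSuccAbove_apply]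
      rw [Fin.forall_iff_succAbove i]
      rfl
    have hfun_cont : Continuous fun p : ℝ × (Fin n → ℝ)
        => pd i g (ins i p.1 p.2) :=
      (contDiff_pd i hg).continuous.comp (continuous_insertNth' i)
    have key : ∀ x : E (n + 1), pd i g x
        = pd i g (i.insertNth ((e x).1) ((e x).2) : Fin (n + 1) → ℝ) := by
      intro x
      simp [he, ins, MeasurableEquiv.piFinSuccAbove_apply, Fin.insertNth_self_removeNth]
    have inner_zero : ∀ y : Fin n → ℝ,
        (∫ s in Set.Icc (0:ℝ) 1, pd i g (ins i s y)) = 0 := by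
      intro y
      have hderiv : ∀ s ∈ Set.uIcc (0:ℝ) 1,
          HasDerivAt (fun s => g (ins i s y))
            (pd i g (ins i s y)) s := by
        intro s _
        have hline : HasDerivAt (fun s : ℝ => ins i s y)
            (Pi.single i 1) s := by
          have hl : (fun s : ℝ => ins i s y)
              = fun s => ins i 0 y + s • (Pi.single i 1 : Fin (n + 1) → ℝ) := by
            funext s; exact insertNth_eq_line i y s
          rw [hl]
          simpa using ((hasDerivAt_id s).smul_const
            ((Pi.single i 1 : Fin (n + 1) → ℝ))).const_add (ins i 0 y)
        exact ((hg.differentiable (by simp) _).hasFDerivAt).comp_hasDerivAt s hline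
      rw [MeasureTheory.integral_Icc_eq_integral_Ioc,
        ← intervalIntegral.integral_of_le (zero_le_one)]
      rw [intervalIntegral.integral_eq_sub_of_hasDerivAt hderiv
        ((hfun_cont.comp (continuous_id.prodMk continuous_const)).intervalIntegrable 0 1)]
      have h1 : ins i (1:ℝ) y
          = ins i 0 y + (Pi.single i 1 : Fin (n + 1) → ℝ) := by
        have h2 := insertNth_eq_line i y 1; simpa using h2
      rw [h1, hper (ins i 0 y) i]
      ring
    calc ∫ x in box (n + 1), pd i g x
        = ∫ x in e ⁻¹' ((Set.Icc (0:ℝ) 1) ×ˢ box n),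
            (fun p : ℝ × (Fin n → ℝ) => pd i g (ins i p.1 p.2))
              (e x) := by
          rw [← hbox]
          exact setIntegral_congr_fun measurableSet_box (fun x _ => key x)
      _ = ∫ p in (Set.Icc (0:ℝ) 1) ×ˢ box n,
            pd i g (ins i p.1 p.2) ∂(volume.prod volume) :=
          hmp.setIntegral_preimage_emb e.measurableEmbedding
            (fun p : ℝ × (Fin n → ℝ) => pd i g (ins i p.1 p.2)) _
      _ = ∫ y in box n, ∫ s in Set.Icc (0:ℝ) 1,
            pd i g (ins i s y) := by
          rw [← Measure.prod_restrict]
          refine integral_prod_symm _ ?_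
          rw [Measure.prod_restrict]
          exact hfun_cont.continuousOn.integrableOn_compact (isCompact_Icc.prod isCompact_box)
      _ = 0 := by
          simp only [inner_zero, integral_zero]



theorem sum_swap_SB {n : ℕ} (W U : Fin n → ℝ) (S : Fin n → Fin n → ℝ)
    (hS : ∀ i j, S i j = S j i) :
    ∑ i, ∑ j, U i * (W j * S i j) = ∑ i, ∑ j, W i * (S i j * U j) := by
  rw [Finset.sum_comm]
  exact Finset.sum_congr rfl fun i _ => Finset.sum_congr rfl fun j _ => by
    rw [hS j i]; ring

theorem sum_swap_V {n : ℕ} (W : Fin n → ℝ) (V : Fin n → Fin n → ℝ) :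
    ∑ i, ∑ j, V j i * (W i * W j) = ∑ i, ∑ j, W i * (W j * V i j) := by
  rw [Finset.sum_comm]
  exact Finset.sum_congr rfl fun i _ => Finset.sum_congr rfl fun j _ => by ring

theorem algebra_key {n : ℕ} (A : ℝ) (W U a : Fin n → ℝ) (V S : Fin n → Fin n → ℝ)
    (hS : ∀ i j, S i j = S j i) :
    (A * (-∑ i, (W i * U i + V i i))) * (∑ j, (W j)^2)
    + A * (∑ i, 2 * W i * (-a i - ∑ j, (S i j * U j + W j * V i j)))
    + 2 * (∑ i, a i * (A * W i))
    + 2 * (A * ∑ i, ∑ j, ((V i j + V j i)/2 * W i * W j))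
    + ∑ i, ((A * W i * U i + A * V i i) * (∑ j, (W j)^2)
        + (A * U i) * (∑ j, 2 * W j * S i j)) = 0 := by
  set Ts := ∑ i, (W i * U i + V i i) with hTs
  set QQ := ∑ j, (W j)^2 with hQQ
  set Ta := ∑ i, W i * a i with hTa
  set TB := ∑ i, ∑ j, W i * (S i j * U j) with hTB
  set TC := ∑ i, ∑ j, W i * (W j * V i j) with hTC
  have h1 : ∑ i, 2 * W i * (-a i - ∑ j, (S i j * U j + W j * V i j))
      = -2 * Ta - 2 * TB - 2 * TC := by
    rw [hTa, hTB, hTC, Finset.mul_sum, Finset.mul_sum, Finset.mul_sum,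
      ← Finset.sum_sub_distrib, ← Finset.sum_sub_distrib]
    refine Finset.sum_congr rfl fun i _ => ?_
    have e1 : W i * ∑ j, (S i j * U j + W j * V i j)
        = (∑ j, W i * (S i j * U j)) + ∑ j, W i * (W j * V i j) := by
      rw [Finset.mul_sum, ← Finset.sum_add_distrib]
      exact Finset.sum_congr rfl fun j _ => by ring
    have e2 : 2 * W i * (-a i - ∑ j, (S i j * U j + W j * V i j))
        = -2 * (W i * a i) - 2 * (W i * ∑ j, (S i j * U j + W j * V i j)) := by ring
    rw [e2, e1]; ring
  have h2 : ∑ i, a i * (A * W i) = A * Ta := by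
    rw [hTa, Finset.mul_sum]
    exact Finset.sum_congr rfl fun i _ => by ring
  have h3 : ∑ i, ∑ j, ((V i j + V j i)/2 * W i * W j) = TC := by
    have e1 : ∀ i : Fin n, ∀ j : Fin n, (V i j + V j i)/2 * W i * W j
        = (W i * (W j * V i j)) / 2 + (V j i * (W i * W j)) / 2 := fun i j => by ring
    calc ∑ i, ∑ j, ((V i j + V j i)/2 * W i * W j)
        = (∑ i, ∑ j, W i * (W j * V i j)) / 2
          + (∑ i, ∑ j, V j i * (W i * W j)) / 2 := by
          rw [Finset.sum_div, Finset.sum_div, ← Finset.sum_add_distrib]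
          refine Finset.sum_congr rfl fun i _ => ?_
          rw [Finset.sum_div, Finset.sum_div, ← Finset.sum_add_distrib]
          exact Finset.sum_congr rfl fun j _ => e1 i j
      _ = TC := by rw [sum_swap_V W V, ← hTC]; ring
  have h4 : ∑ i, ((A * W i * U i + A * V i i) * QQ + (A * U i) * (∑ j, 2 * W j * S i j))
      = A * Ts * QQ + 2 * A * TB := by
    rw [Finset.sum_add_distrib]
    congr 1
    · rw [hTs, Finset.mul_sum Finset.univ (fun i => W i * U i + V i i) A,
        Finset.sum_mul Finset.univ (fun i => A * (W i * U i + V i i)) QQ]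
      exact Finset.sum_congr rfl fun i _ => by ring
    · have e1 : ∀ i : Fin n, (A * U i) * (∑ j, 2 * W j * S i j)
          = 2 * A * ∑ j, U i * (W j * S i j) := fun i => by
        rw [Finset.mul_sum, Finset.mul_sum]
        exact Finset.sum_congr rfl fun j _ => by ring
      calc ∑ i, (A * U i) * (∑ j, 2 * W j * S i j)
          = ∑ i, 2 * A * ∑ j, U i * (W j * S i j) :=
            Finset.sum_congr rfl fun i _ => e1 i
        _ = 2 * A * ∑ i, ∑ j, U i * (W j * S i j) := by rw [Finset.mul_sum]
        _ = 2 * A * TB := by rw [sum_swap_SB W U S hS, ← hTB]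
  rw [h1, h2, h3, h4]
  ring


theorem dv_sub {F G : P d → ℝ} {v p : P d} (hF : DifferentiableAt ℝ F p)
    (hG : DifferentiableAt ℝ G p) :
    dv v (fun q => F q - G q) p = dv v F p - dv v G p := by
  simp [dv, fderiv_fun_sub hF hG]

/-- spatial translation invariance of the derivative of a periodic function -/
theorem fderiv_periodic {F : P d → ℝ} (hF : Differentiable ℝ F) (c : E d)
    (hper : ∀ p : P d, F (p.1, p.2 + c) = F p) (p : P d) :
    fderiv ℝ F (p.1, p.2 + c) = fderiv ℝ F p := by
  set v0 : P d := ((0 : ℝ), c) with hv0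
  have hpv : p + v0 = (p.1, p.2 + c) := by ext <;> simp [hv0]
  have htr : (fun q : P d => F (q + v0)) = F := by
    funext q
    have hq : q + v0 = (q.1, q.2 + c) := by ext <;> simp [hv0]
    rw [hq, hper]
  have h1 : HasFDerivAt (fun q : P d => F (q + v0)) (fderiv ℝ F (p + v0)) p := by
    have hbase := (hF (p + v0)).hasFDerivAt
    have hid : HasFDerivAt (fun q : P d => q + v0)
        (ContinuousLinearMap.id ℝ (P d)) p := (hasFDerivAt_id p).add_const v0
    have h := hbase.comp p hid
    simp only [ContinuousLinearMap.comp_id] at h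
    exact h
  rw [htr] at h1
  rw [← hpv, ← h1.fderiv]

theorem dv_periodic {F : P d → ℝ} {v : P d} (hF : Differentiable ℝ F) (c : E d)
    (hper : ∀ p : P d, F (p.1, p.2 + c) = F p) (p : P d) :
    dv v F (p.1, p.2 + c) = dv v F p := by
  simp [dv, fderiv_periodic hF c hper p]

section Joint

variable (ρ : ℝ → E d → ℝ) (u : ℝ → E d → Fin d → ℝ)

def Rf : P d → ℝ := fun p => ρ p.1 p.2
def Uf (j : Fin d) : P d → ℝ := fun p => u p.1 p.2 j
def Lf : P d → ℝ := fun p => Real.log (ρ p.1 p.2)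
def Wf (i : Fin d) : P d → ℝ := px i (Lf ρ)
def Qf : P d → ℝ := fun p => ∑ i, (Wf ρ i p) ^ 2
def dUf : P d → ℝ := fun p => ∑ j, px j (Uf u j) p
def Gff (i : Fin d) : P d → ℝ := fun p => Rf ρ p * Uf u i p * Qf ρ p
def Phif : P d → ℝ := fun p => Rf ρ p * Qf ρ p

variable {ρ} {u}
variable (hρ : ContDiff ℝ (⊤ : ℕ∞) fun p : P d => ρ p.1 p.2)
  (hu : ∀ j, ContDiff ℝ (⊤ : ℕ∞) fun p : P d => u p.1 p.2 j)
  (hpos : ∀ t x, 0 < ρ t x)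

include hρ in
theorem hRs : ContDiff ℝ (⊤ : ℕ∞) (Rf ρ) := hρ

include hu in
theorem hUs (j : Fin d) : ContDiff ℝ (⊤ : ℕ∞) (Uf u j) := hu j

include hρ hpos in
theorem hLs : ContDiff ℝ (⊤ : ℕ∞) (Lf ρ) := by
  rw [contDiff_iff_contDiffAt]
  intro p
  exact (Real.contDiffAt_log.mpr (hpos p.1 p.2).ne').comp p hρ.contDiffAt

include hρ hpos in
theorem hWs (i : Fin d) : ContDiff ℝ (⊤ : ℕ∞) (Wf ρ i) := contDiff_dv (hLs hρ hpos)

include hρ hpos in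
theorem hQs : ContDiff ℝ (⊤ : ℕ∞) (Qf ρ) :=
  ContDiff.sum fun i _ => (hWs hρ hpos i).pow 2

include hu in
theorem hdUs : ContDiff ℝ (⊤ : ℕ∞) (dUf u) :=
  ContDiff.sum fun j _ => contDiff_dv (hu j)

include hρ hu hpos in
theorem hGs (i : Fin d) : ContDiff ℝ (⊤ : ℕ∞) (Gff ρ u i) :=
  ((hρ.mul (hu i)).mul (hQs hρ hpos))

include hρ hpos in
theorem hPhis : ContDiff ℝ (⊤ : ℕ∞) (Phif ρ) := hρ.mul (hQs hρ hpos)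


include hρ hu hpos in
theorem hexpRU (i : Fin d) (q : P d) :
    px i (fun q' => Rf ρ q' * Uf u i q') q
      = Rf ρ q * Wf ρ i q * Uf u i q + Rf ρ q * px i (Uf u i) q := by
  have dR : DifferentiableAt ℝ (Rf ρ) q := (hρ.differentiable (by simp)) q
  have dU : DifferentiableAt ℝ (Uf u i) q := ((hu i).differentiable (by simp)) q
  have h1 : px i (fun q' => Rf ρ q' * Uf u i q') q
      = px i (Rf ρ) q * Uf u i q + Rf ρ q * px i (Uf u i) q := dv_mul dR dU
  have hWdef : Wf ρ i q = (Rf ρ q)⁻¹ * px i (Rf ρ) q :=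
    dv_log dR (hpos q.1 q.2).ne'
  have hne : Rf ρ q ≠ 0 := (hpos q.1 q.2).ne'
  have hpxR : px i (Rf ρ) q = Rf ρ q * Wf ρ i q := by
    rw [hWdef, ← mul_assoc, mul_inv_cancel₀ hne, one_mul]
  rw [h1, hpxR]

include hρ hpos in
theorem hpxRW (i : Fin d) (q : P d) :
    px i (Rf ρ) q = Rf ρ q * Wf ρ i q := by
  have dR : DifferentiableAt ℝ (Rf ρ) q := (hρ.differentiable (by simp)) q
  have hWdef : Wf ρ i q = (Rf ρ q)⁻¹ * px i (Rf ρ) q :=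
    dv_log dR (hpos q.1 q.2).ne'
  have hne : Rf ρ q ≠ 0 := (hpos q.1 q.2).ne'
  rw [hWdef, ← mul_assoc, mul_inv_cancel₀ hne, one_mul]

include hρ hu hpos in
theorem hcont' (hcontJ : ∀ p : P d,
      pt (Rf ρ) p + ∑ i, px i (fun q => Rf ρ q * Uf u i q) p = 0) (q : P d) :
    pt (Rf ρ) q = Rf ρ q * (-∑ i, (Wf ρ i q * Uf u i q + px i (Uf u i) q)) := by
  have h0 := hcontJ q
  rw [Finset.sum_congr rfl (fun i _ => hexpRU hρ hu hpos i q)] at h0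
  have h1 : ∑ i, (Rf ρ q * Wf ρ i q * Uf u i q + Rf ρ q * px i (Uf u i) q)
      = Rf ρ q * ∑ i, (Wf ρ i q * Uf u i q + px i (Uf u i) q) := by
    rw [Finset.mul_sum]
    exact Finset.sum_congr rfl fun i _ => by ring
  rw [h1] at h0
  linear_combination h0

include hρ hu hpos in
theorem hptL' (hcontJ : ∀ p : P d,
      pt (Rf ρ) p + ∑ i, px i (fun q => Rf ρ q * Uf u i q) p = 0) (q : P d) :
    pt (Lf ρ) q = -dUf u q - ∑ j, Wf ρ j q * Uf u j q := by
  have dR : DifferentiableAt ℝ (Rf ρ) q := (hρ.differentiable (by simp)) q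
  have h1 : pt (Lf ρ) q = (Rf ρ q)⁻¹ * pt (Rf ρ) q :=
    dv_log dR (hpos q.1 q.2).ne'
  have hne : Rf ρ q ≠ 0 := (hpos q.1 q.2).ne'
  rw [h1, hcont' hρ hu hpos hcontJ q, ← mul_assoc,
    inv_mul_cancel₀ hne, one_mul]
  have h2 : ∑ i, (Wf ρ i q * Uf u i q + px i (Uf u i) q)
      = (∑ j, Wf ρ j q * Uf u j q) + dUf u q := by
    rw [Finset.sum_add_distrib]
    rfl
  rw [h2]; ring

include hρ hu hpos in
theorem pointwise_identity
    (hcontJ : ∀ p : P d,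
      pt (Rf ρ) p + ∑ i, px i (fun q => Rf ρ q * Uf u i q) p = 0)
    (p : P d) :
    pt (Phif ρ) p
      + 2 * (∑ i, px i (dUf u) p * px i (Rf ρ) p)
      + 2 * (Rf ρ p * ∑ i, ∑ j,
          ((px i (Uf u j) p + px j (Uf u i) p) / 2) * Wf ρ i p * Wf ρ j p)
      + ∑ i, px i (Gff ρ u i) p = 0 := by
  have hL : ContDiff ℝ (⊤ : ℕ∞) (Lf ρ) := hLs hρ hpos
  have hQ : ContDiff ℝ (⊤ : ℕ∞) (Qf ρ) := hQs hρ hpos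
  have dR : ∀ q, DifferentiableAt ℝ (Rf ρ) q := fun q => (hρ.differentiable (by simp)) q
  have dU : ∀ j q, DifferentiableAt ℝ (Uf u j) q := fun j q => ((hu j).differentiable (by simp)) q
  have dW : ∀ i q, DifferentiableAt ℝ (Wf ρ i) q :=
    fun i q => ((hWs hρ hpos i).differentiable (by simp)) q
  have dQ : ∀ q, DifferentiableAt ℝ (Qf ρ) q := fun q => (hQ.differentiable (by simp)) q
  have ddU : ∀ q, DifferentiableAt ℝ (dUf u) q := fun q => ((hdUs hu).differentiable (by simp)) q
  have hS : ∀ (i j : Fin d) (q : P d), px i (Wf ρ j) q = px j (Wf ρ i) q :=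
    fun i j q => dv_comm hL _ _ q
  -- time derivative of W
  have hptW : ∀ (i : Fin d) (q : P d), pt (Wf ρ i) q
      = -px i (dUf u) q
        - ∑ j, (px i (Wf ρ j) q * Uf u j q + Wf ρ j q * px i (Uf u j) q) := by
    intro i q
    have h1 : pt (Wf ρ i) q = px i (pt (Lf ρ)) q := dv_comm hL _ _ q
    have h2 : pt (Lf ρ) = fun q' => -dUf u q' - ∑ j, Wf ρ j q' * Uf u j q' :=
      funext (hptL' hρ hu hpos hcontJ)
    rw [h1, h2]
    calc px i (fun q' => -dUf u q' - ∑ j, Wf ρ j q' * Uf u j q') q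
        = px i (fun q' => -dUf u q') q
          - px i (fun q' => ∑ j, Wf ρ j q' * Uf u j q') q :=
          dv_sub (ddU q).neg (DifferentiableAt.fun_sum fun j _ => (dW j q).mul (dU j q))
      _ = -px i (dUf u) q
          - ∑ j, (px i (Wf ρ j) q * Uf u j q + Wf ρ j q * px i (Uf u j) q) := by
          have e1 : px i (fun q' => -dUf u q') q = -px i (dUf u) q := dv_neg
          have e2 : px i (fun q' => ∑ j, Wf ρ j q' * Uf u j q') q
              = ∑ j, px i (fun q' => Wf ρ j q' * Uf u j q') q :=
            dv_sum Finset.univ (fun j => fun q' => Wf ρ j q' * Uf u j q')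
              (fun j _ => (dW j q).mul (dU j q))
          rw [e1, e2]
          congr 1
          exact Finset.sum_congr rfl fun j _ => dv_mul (dW j q) (dU j q)
  have hptQ : ∀ q : P d, pt (Qf ρ) q = ∑ i, 2 * Wf ρ i q * pt (Wf ρ i) q := by
    intro q
    calc pt (Qf ρ) q = ∑ i, pt (fun q' => Wf ρ i q' ^ 2) q :=
        dv_sum Finset.univ (fun i => fun q' => Wf ρ i q' ^ 2)
          (fun i _ => (dW i q).pow 2)
      _ = ∑ i, 2 * Wf ρ i q * pt (Wf ρ i) q :=
        Finset.sum_congr rfl fun i _ => dv_sq (dW i q)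
  have hpxQ : ∀ (i : Fin d) (q : P d), px i (Qf ρ) q
      = ∑ j, 2 * Wf ρ j q * px i (Wf ρ j) q := by
    intro i q
    calc px i (Qf ρ) q = ∑ j, px i (fun q' => Wf ρ j q' ^ 2) q :=
        dv_sum Finset.univ (fun j => fun q' => Wf ρ j q' ^ 2)
          (fun j _ => (dW j q).pow 2)
      _ = ∑ j, 2 * Wf ρ j q * px i (Wf ρ j) q :=
        Finset.sum_congr rfl fun j _ => dv_sq (dW j q)
  have hptPhi : pt (Phif ρ) p = pt (Rf ρ) p * Qf ρ p + Rf ρ p * pt (Qf ρ) p :=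
    dv_mul (dR p) (dQ p)
  have hpxG : ∀ i : Fin d, px i (Gff ρ u i) p
      = (Rf ρ p * Wf ρ i p * Uf u i p + Rf ρ p * px i (Uf u i) p) * Qf ρ p
        + (Rf ρ p * Uf u i p) * px i (Qf ρ) p := by
    intro i
    have h1 : px i (Gff ρ u i) p
        = px i (fun q => Rf ρ q * Uf u i q) p * Qf ρ p
          + (Rf ρ p * Uf u i p) * px i (Qf ρ) p :=
      dv_mul ((dR p).mul (dU i p)) (dQ p)
    rw [h1, hexpRU hρ hu hpos i p]
  rw [hptPhi, hcont' hρ hu hpos hcontJ p, hptQ p]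
  simp only [hpxG, hpxQ, hptW, hpxRW hρ hpos]
  simp only [Qf]
  exact algebra_key (Rf ρ p) (fun i => Wf ρ i p) (fun i => Uf u i p)
    (fun i => px i (dUf u) p) (fun i j => px i (Uf u j) p)
    (fun i j => px i (Wf ρ j) p) (fun i j => hS i j p)

end Joint


theorem continuous_tx {d : ℕ} (t : ℝ) : Continuous fun x : E d => ((t, x) : P d) :=
  Continuous.prodMk continuous_const continuous_id

theorem continuous_px_slice {d : ℕ} {F : P d → ℝ} (hF : ContDiff ℝ (⊤ : ℕ∞) F) (i : Fin d) (t : ℝ) :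
    Continuous fun x : E d => px i F (t, x) :=
  (contDiff_dv hF).continuous.comp (continuous_tx t)

theorem continuous_pt_slice {d : ℕ} {F : P d → ℝ} (hF : ContDiff ℝ (⊤ : ℕ∞) F) (t : ℝ) :
    Continuous fun x : E d => pt F (t, x) :=
  (contDiff_dv hF).continuous.comp (continuous_tx t)

theorem continuous_fun_slice {d : ℕ} {F : P d → ℝ} (hF : ContDiff ℝ (⊤ : ℕ∞) F) (t : ℝ) :
    Continuous fun x : E d => F (t, x) :=
  hF.continuous.comp (continuous_tx t)

end CeAux

open CeAux in
/-- Integral identity for smooth positive solutions of the continuity equation on the torus: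
`(1/2) d/dt ∫ ρ|∇log ρ|² + ∫ ∇div u · ∇ρ + ∫ ρ D(u) : (∇log ρ ⊗ ∇log ρ) = 0`. -/
theorem log_density_integral_identity {d : ℕ}
    (ρ : ℝ → (Fin d → ℝ) → ℝ) (u : ℝ → (Fin d → ℝ) → Fin d → ℝ)
    (hρ : ContDiff ℝ (⊤ : ℕ∞) fun p : ℝ × (Fin d → ℝ) => ρ p.1 p.2)
    (hu : ∀ j, ContDiff ℝ (⊤ : ℕ∞) fun p : ℝ × (Fin d → ℝ) => u p.1 p.2 j)
    (hpos : ∀ t x, 0 < ρ t x)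
    (hper : ∀ t x k, ρ t (x + Pi.single k 1) = ρ t x)
    (huper : ∀ t x k, u t (x + Pi.single k 1) = u t x)
    (hcont : ∀ t x, deriv (fun s => ρ s x) t
        + ∑ i, pd i (fun y => ρ t y * u t y i) x = 0) :
    ∀ t : ℝ,
      (1 / 2) * deriv (fun s => ∫ x in box d,
          ρ s x * ∑ i, (pd i (fun y => Real.log (ρ s y)) x) ^ 2) t
      + (∫ x in box d,
          ∑ i, pd i (fun y => ∑ j, pd j (fun z => u t z j) y) x * pd i (ρ t) x)
      + (∫ x in box d, ρ t x * ∑ i, ∑ j,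
          ((pd i (fun y => u t y j) x + pd j (fun y => u t y i) x) / 2)
            * pd i (fun y => Real.log (ρ t y)) x
            * pd j (fun y => Real.log (ρ t y)) x) = 0 := by
  intro t
  have hL : ContDiff ℝ (⊤ : ℕ∞) (Lf ρ) := hLs (d := d) hρ hpos
  -- joint form of the continuity equation
  have hcontJ : ∀ p : P d,
      pt (Rf ρ) p + ∑ i, px i (fun q => Rf ρ q * Uf u i q) p = 0 := by
    intro p
    have h := hcont p.1 p.2
    have h1 : deriv (fun s => ρ s p.2) p.1 = pt (Rf ρ) p :=
      deriv_slice (F := Rf ρ) hρ p.1 p.2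
    have h2 : (∑ i, pd i (fun y => ρ p.1 y * u p.1 y i) p.2)
        = ∑ i, px i (fun q => Rf ρ q * Uf u i q) p :=
      Finset.sum_congr rfl fun i _ =>
        pd_slice (F := fun q => Rf ρ q * Uf u i q) (hρ.mul (hu i)) i p.1 p.2
    rw [h1, h2] at h
    exact h
  -- rewrite the time-derivative term
  have hfun : (fun s => ∫ x in box d,
      ρ s x * ∑ i, (pd i (fun y => Real.log (ρ s y)) x) ^ 2)
      = fun s => ∫ x in box d, Phif ρ (s, x) := by
    funext s
    refine setIntegral_congr_fun measurableSet_box fun x _ => ?_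
    show ρ s x * ∑ i, (pd i (fun y => Real.log (ρ s y)) x) ^ 2
      = Rf ρ (s, x) * Qf ρ (s, x)
    congr 1
    refine Finset.sum_congr rfl fun i _ => ?_
    congr 1
    exact pd_slice (F := Lf ρ) hL i s x
  rw [hfun, (hasDerivAt_integral_box (hPhis hρ hpos) t).deriv]
  -- rewrite the second integral
  have hI2 : (∫ x in box d,
      ∑ i, pd i (fun y => ∑ j, pd j (fun z => u t z j) y) x * pd i (ρ t) x)
      = ∫ x in box d, ∑ i, px i (dUf u) (t, x) * px i (Rf ρ) (t, x) := by
    refine setIntegral_congr_fun measurableSet_box fun x _ => ?_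
    refine Finset.sum_congr rfl fun i _ => ?_
    congr 1
    · have hin : (fun y => ∑ j, pd j (fun z => u t z j) y)
          = fun y => dUf u (t, y) := by
        funext y
        have h3 : ∑ j, pd j (fun z => u t z j) y = ∑ j, px j (Uf u j) (t, y) :=
          Finset.sum_congr rfl fun j _ => pd_slice (F := Uf u j) (hu j) j t y
        exact h3
      rw [hin]
      exact pd_slice (F := dUf u) (hdUs hu) i t x
    · exact pd_slice (F := Rf ρ) hρ i t x
  rw [hI2]
  -- rewrite the third integral
  have hI3 : (∫ x in box d, ρ t x * ∑ i, ∑ j,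
      ((pd i (fun y => u t y j) x + pd j (fun y => u t y i) x) / 2)
        * pd i (fun y => Real.log (ρ t y)) x
        * pd j (fun y => Real.log (ρ t y)) x)
      = ∫ x in box d, Rf ρ (t, x) * ∑ i, ∑ j,
          ((px i (Uf u j) (t, x) + px j (Uf u i) (t, x)) / 2)
            * Wf ρ i (t, x) * Wf ρ j (t, x) := by
    refine setIntegral_congr_fun measurableSet_box fun x _ => ?_
    show ρ t x * _ = Rf ρ (t, x) * _
    congr 1
    refine Finset.sum_congr rfl fun i _ => ?_
    refine Finset.sum_congr rfl fun j _ => ?_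
    have e1 : pd i (fun y => u t y j) x = px i (Uf u j) (t, x) :=
      pd_slice (F := Uf u j) (hu j) i t x
    have e2 : pd j (fun y => u t y i) x = px j (Uf u i) (t, x) :=
      pd_slice (F := Uf u i) (hu i) j t x
    have e3 : pd i (fun y => Real.log (ρ t y)) x = Wf ρ i (t, x) :=
      pd_slice (F := Lf ρ) hL i t x
    have e4 : pd j (fun y => Real.log (ρ t y)) x = Wf ρ j (t, x) :=
      pd_slice (F := Lf ρ) hL j t x
    rw [e1, e2, e3, e4]
  rw [hI3]
  -- names for the three functions
  set f2 : E d → ℝ := fun x => ∑ i, px i (dUf u) (t, x) * px i (Rf ρ) (t, x) with hf2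
  set f3 : E d → ℝ := fun x => Rf ρ (t, x) * ∑ i, ∑ j,
      ((px i (Uf u j) (t, x) + px j (Uf u i) (t, x)) / 2)
        * Wf ρ i (t, x) * Wf ρ j (t, x) with hf3
  set pdG : Fin d → E d → ℝ := fun i x => pd i (fun y => Gff ρ u i (t, y)) x with hpdG
  -- integrability
  have hint2 : IntegrableOn f2 (box d) volume :=
    ((continuous_finset_sum _ fun i _ =>
      (continuous_px_slice (hdUs hu) i t).mul
        (continuous_px_slice hρ i t)).continuousOn).integrableOn_compact isCompact_box
  have hint3 : IntegrableOn f3 (box d) volume := by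
    refine (Continuous.continuousOn ?_).integrableOn_compact isCompact_box
    refine (continuous_fun_slice hρ t).mul ?_
    refine continuous_finset_sum _ fun i _ => continuous_finset_sum _ fun j _ => ?_
    exact ((((continuous_px_slice (hu j) i t).add
      (continuous_px_slice (hu i) j t)).div_const 2).mul
        (continuous_px_slice hL i t)).mul (continuous_px_slice hL j t)
  have hint4 : ∀ i : Fin d, IntegrableOn (pdG i) (box d) volume := fun i =>
    (((contDiff_pd i (contDiff_slice (hGs hρ hu hpos i) t)).continuous).continuousOn
      ).integrableOn_compact isCompact_box
  -- the divergence integrals vanish by periodicity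
  have hzero : ∀ i : Fin d, ∫ x in box d, pdG i x = 0 := by
    intro i
    refine integral_pd_eq_zero (contDiff_slice (hGs hρ hu hpos i) t) ?_ i
    intro y k
    show Gff ρ u i (t, y + Pi.single k 1) = Gff ρ u i (t, y)
    have hR2 : ∀ (s : ℝ) (y' : E d), Rf ρ (s, y' + Pi.single k 1) = Rf ρ (s, y') :=
      fun s y' => hper s y' k
    have hU2 : ∀ (m : Fin d) (s : ℝ) (y' : E d),
        Uf u m (s, y' + Pi.single k 1) = Uf u m (s, y') :=
      fun m s y' => congrFun (huper s y' k) m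
    have hLper : ∀ p : P d, Lf ρ (p.1, p.2 + Pi.single k 1) = Lf ρ p :=
      fun p => congrArg Real.log (hper p.1 p.2 k)
    have hW2 : ∀ (j : Fin d) (s : ℝ) (y' : E d),
        Wf ρ j (s, y' + Pi.single k 1) = Wf ρ j (s, y') :=
      fun j s y' => dv_periodic (hL.differentiable (by simp)) (Pi.single k 1) hLper (s, y')
    show Rf ρ (t, y + Pi.single k 1) * Uf u i (t, y + Pi.single k 1)
        * Qf ρ (t, y + Pi.single k 1)
      = Rf ρ (t, y) * Uf u i (t, y) * Qf ρ (t, y)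
    rw [hR2 t y, hU2 i t y]
    congr 1
    show (∑ j, (Wf ρ j (t, y + Pi.single k 1)) ^ 2) = ∑ j, (Wf ρ j (t, y)) ^ 2
    exact Finset.sum_congr rfl fun j _ => by rw [hW2 j t y]
  -- pointwise identity, rearranged
  have hkey : ∀ x : E d, pt (Phif ρ) (t, x)
      = (-2) * f2 x + ((-2) * f3 x + (-1) * (∑ i, pdG i x)) := by
    intro x
    have h := pointwise_identity hρ hu hpos hcontJ (t, x)
    have hG : (∑ i, px i (Gff ρ u i) (t, x)) = ∑ i, pdG i x :=
      Finset.sum_congr rfl fun i _ =>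
        (pd_slice (F := Gff ρ u i) (hGs hρ hu hpos i) i t x).symm
    rw [hG] at h
    rw [hf2, hf3]
    linarith [h]
  -- integrate the identity
  have hPhiInt : ∫ x in box d, pt (Phif ρ) (t, x)
      = (-2) * (∫ x in box d, f2 x) + ((-2) * (∫ x in box d, f3 x) + (-1) * (0 : ℝ)) := by
    rw [setIntegral_congr_fun measurableSet_box fun x _ => hkey x]
    have hA : Integrable (fun x => (-2 : ℝ) * f2 x) (volume.restrict (box d)) :=
      hint2.const_mul _
    have hB : Integrable (fun x => (-2 : ℝ) * f3 x) (volume.restrict (box d)) :=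
      hint3.const_mul _
    have hC : Integrable (fun x => (-1 : ℝ) * ∑ i, pdG i x) (volume.restrict (box d)) :=
      (integrable_finset_sum _ fun i _ => hint4 i).const_mul _
    have hBC : Integrable (fun x => (-2 : ℝ) * f3 x + (-1 : ℝ) * ∑ i, pdG i x)
        (volume.restrict (box d)) := hB.add hC
    rw [integral_add hA hBC, integral_add hB hC]
    rw [integral_const_mul, integral_const_mul, integral_const_mul]
    rw [integral_finset_sum _ fun i _ => hint4 i]
    rw [Finset.sum_congr rfl fun i _ => hzero i]
    simp
  rw [hPhiInt]
  ring
end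
end

section
/- Effective velocity transformation with parameters μ, λ (quantum case): let ν > κ > 0, μ = ν − √(ν²−κ²), λ = √(ν²−κ²), and let (ρ,u) be smooth positive solutions of ∂_tρ + div(ρu) = 0 and ∂_t(ρu) + div(ρu⊗u) − 2ν div(ρD(u)) = 2κ²ρ∇(Δ√ρ/√ρ). Then w = u + μ∇log ρ satisfies ∂_tρ + div(ρw) = μΔρ and ∂_t(ρw) + div(ρw⊗w) − μΔ(ρw) − 2λ div(ρDw) = 0. -/
open MeasureTheory Real Filter

noncomputable section

namespace EV

variable {d : ℕ} {i j k : Fin d} {f g : (Fin d → ℝ) → ℝ} {x : Fin d → ℝ}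

/-- directional derivative -/
def dd {E : Type*} [NormedAddCommGroup E] [NormedSpace ℝ E] (v : E) (f : E → ℝ) (x : E) : ℝ :=
  fderiv ℝ f x v

section dd
variable {E : Type*} [NormedAddCommGroup E] [NormedSpace ℝ E] {F : E → ℝ} {v w : E} {z : E}

lemma contDiff_dd (hF : ContDiff ℝ (⊤ : ℕ∞) F) (v : E) : ContDiff ℝ (⊤ : ℕ∞) (dd v F) := by
  have h1 : ContDiff ℝ (⊤ : ℕ∞) (fderiv ℝ F) := hF.fderiv_right (by simp)
  exact h1.clm_apply contDiff_const

lemma dd_fderiv (hF : ContDiff ℝ (⊤ : ℕ∞) F) (v w : E) (z : E) :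
    fderiv ℝ (dd w F) z v = fderiv ℝ (fderiv ℝ F) z v w := by
  have h1 : DifferentiableAt ℝ (fderiv ℝ F) z :=
    ((hF.fderiv_right (m := (⊤ : ℕ∞)) (by simp)).differentiable (by simp)).differentiableAt
  have h2 : fderiv ℝ (fun y => (fderiv ℝ F y) w) z
      = (fderiv ℝ F z).comp (fderiv ℝ (fun _ : E => w) z)
        + (fderiv ℝ (fderiv ℝ F) z).flip w :=
    fderiv_clm_apply h1 (differentiableAt_const _)
  have h3 : fderiv ℝ (fun _ : E => w) z = 0 := fderiv_const_apply w
  rw [h3] at h2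
  have h4 : dd w F = fun y => (fderiv ℝ F y) w := rfl
  rw [h4, h2]
  simp

lemma dd_comm (hF : ContDiff ℝ (⊤ : ℕ∞) F) (v w : E) (z : E) :
    dd v (dd w F) z = dd w (dd v F) z := by
  have hsym : IsSymmSndFDerivAt ℝ F z :=
    (hF.contDiffAt).isSymmSndFDerivAt (by rw [minSmoothness_of_isRCLikeNormedField]; exact WithTop.coe_le_coe.2 (le_top : (2 : ℕ∞) ≤ ⊤))
  rw [dd, dd, dd_fderiv hF, dd_fderiv hF]
  exact hsym v w

end dd

lemma pd_comm (hf : ContDiff ℝ (⊤ : ℕ∞) f) (i k : Fin d) (x : Fin d → ℝ) :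
    pd i (pd k f) x = pd k (pd i f) x := by
  exact dd_comm hf (Pi.single i 1) (Pi.single k 1) x

lemma contDiff_pd (hf : ContDiff ℝ (⊤ : ℕ∞) f) (i : Fin d) : ContDiff ℝ (⊤ : ℕ∞) (pd i f) :=
  contDiff_dd hf _

lemma pd_add (hf : DifferentiableAt ℝ f x) (hg : DifferentiableAt ℝ g x) :
    pd i (fun y => f y + g y) x = pd i f x + pd i g x := by
  simp [pd, fderiv_fun_add hf hg]

lemma pd_sub (hf : DifferentiableAt ℝ f x) (hg : DifferentiableAt ℝ g x) :
    pd i (fun y => f y - g y) x = pd i f x - pd i g x := by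
  simp [pd, fderiv_fun_sub hf hg]

lemma pd_mul (hf : DifferentiableAt ℝ f x) (hg : DifferentiableAt ℝ g x) :
    pd i (fun y => f y * g y) x = f x * pd i g x + g x * pd i f x := by
  simp [pd, fderiv_fun_mul hf hg]

lemma pd_const_mul (hf : DifferentiableAt ℝ f x) (c : ℝ) :
    pd i (fun y => c * f y) x = c * pd i f x := by
  simp [pd, fderiv_const_mul hf c]

lemma pd_neg (hf : DifferentiableAt ℝ f x) :
    pd i (fun y => -f y) x = -pd i f x := by
  simp [pd]

lemma pd_sum {m : ℕ} {A : Fin m → (Fin d → ℝ) → ℝ}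
    (h : ∀ l, DifferentiableAt ℝ (A l) x) :
    pd i (fun y => ∑ l, A l y) x = ∑ l, pd i (A l) x := by
  simp [pd, fderiv_fun_sum fun l _ => h l]

lemma pd_inv (hg : DifferentiableAt ℝ g x) (hgx : g x ≠ 0) :
    pd i (fun y => (g y)⁻¹) x = -pd i g x / (g x) ^ 2 := by
  have h := ((hasDerivAt_inv hgx).comp_hasFDerivAt x hg.hasFDerivAt).fderiv
  rw [Function.comp_def] at h
  simp [pd, h, smul_eq_mul]
  ring

lemma pd_div (hf : DifferentiableAt ℝ f x) (hg : DifferentiableAt ℝ g x) (hgx : g x ≠ 0) :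
    pd i (fun y => f y / g y) x = (pd i f x * g x - f x * pd i g x) / (g x) ^ 2 := by
  have : (fun y => f y / g y) = fun y => f y * (g y)⁻¹ := by
    funext y; rw [div_eq_mul_inv]
  rw [this, pd_mul hf (hg.fun_inv hgx), pd_inv hg hgx]
  field_simp
  ring

lemma pd_log (hf : DifferentiableAt ℝ f x) (hfx : f x ≠ 0) :
    pd i (fun y => Real.log (f y)) x = pd i f x / f x := by
  have := (hf.hasFDerivAt.log hfx).fderiv
  simp [pd, this, smul_eq_mul, div_eq_inv_mul]

lemma pd_sqrt (hf : DifferentiableAt ℝ f x) (hfx : f x ≠ 0) :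
    pd i (fun y => Real.sqrt (f y)) x = pd i f x / (2 * Real.sqrt (f x)) := by
  have := (hf.hasFDerivAt.sqrt hfx).fderiv
  simp [pd, this, smul_eq_mul, div_eq_inv_mul]

lemma diffAt_div {f g : (Fin d → ℝ) → ℝ} {x} (hf : DifferentiableAt ℝ f x)
    (hg : DifferentiableAt ℝ g x) (h : g x ≠ 0) :
    DifferentiableAt ℝ (fun y => f y / g y) x := by
  simp only [div_eq_mul_inv]
  exact hf.mul (hg.inv h)

section slice
variable {F : ℝ × (Fin d → ℝ) → ℝ} {t s : ℝ} {y : Fin d → ℝ}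

lemma hasFDerivAt_mk_left (s : ℝ) (x : Fin d → ℝ) :
    HasFDerivAt (fun y : Fin d → ℝ => (s, y))
      ((0 : (Fin d → ℝ) →L[ℝ] ℝ).prod (ContinuousLinearMap.id ℝ _)) x :=
  (hasFDerivAt_const s x).prodMk (hasFDerivAt_id x)

lemma hasFDerivAt_mk_right (y : Fin d → ℝ) (t : ℝ) :
    HasFDerivAt (fun s : ℝ => (s, y))
      ((ContinuousLinearMap.id ℝ ℝ).prod (0 : ℝ →L[ℝ] (Fin d → ℝ))) t :=
  (hasFDerivAt_id t).prodMk (hasFDerivAt_const y t)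

lemma pd_slice (hF : ContDiff ℝ (⊤ : ℕ∞) F) :
    pd j (fun y => F (s, y)) x = dd ((0 : ℝ), Pi.single j 1) F (s, x) := by
  have hD : DifferentiableAt ℝ F (s, x) := (hF.differentiable (by simp)).differentiableAt
  have h1 := (hD.hasFDerivAt.comp x (hasFDerivAt_mk_left s x)).fderiv
  have hfun : (fun y => F (s, y)) = F ∘ Prod.mk s := rfl
  rw [pd, hfun, h1]
  simp [dd]

lemma deriv_slice (hF : ContDiff ℝ (⊤ : ℕ∞) F) :
    deriv (fun s => F (s, y)) t = dd ((1 : ℝ), (0 : Fin d → ℝ)) F (t, y) := by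
  have hD : DifferentiableAt ℝ F (t, y) := (hF.differentiable (by simp)).differentiableAt
  have h1 := (hD.hasFDerivAt.comp t (hasFDerivAt_mk_right y t)).fderiv
  have h2 : deriv (fun s => F (s, y)) t = fderiv ℝ (fun s => F (s, y)) t 1 := rfl
  have h3 : (fun s => F (s, y)) = F ∘ fun s => (s, y) := rfl
  rw [h2, h3, h1]
  simp [dd]

lemma mixed_schwarz (hF : ContDiff ℝ (⊤ : ℕ∞) F) (t : ℝ) (x : Fin d → ℝ) (j : Fin d) :
    deriv (fun s => pd j (fun y => F (s, y)) x) t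
      = pd j (fun y => deriv (fun s => F (s, y)) t) x := by
  have h1 : (fun s => pd j (fun y => F (s, y)) x)
      = fun s => dd ((0 : ℝ), Pi.single j 1) F (s, x) := by
    funext s; exact pd_slice hF
  have h2 : (fun y => deriv (fun s => F (s, y)) t)
      = fun y => dd ((1 : ℝ), (0 : Fin d → ℝ)) F (t, y) := by
    funext y; exact deriv_slice hF
  rw [h1, h2, deriv_slice (contDiff_dd hF _), pd_slice (contDiff_dd hF _)]
  exact dd_comm hF _ _ _

lemma differentiable_slice_t (hF : ContDiff ℝ (⊤ : ℕ∞) F) (y : Fin d → ℝ) :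
    Differentiable ℝ (fun s => F (s, y)) :=
  (hF.comp (contDiff_id.prodMk contDiff_const)).differentiable (by simp)

lemma contDiff_slice_x (hF : ContDiff ℝ (⊤ : ℕ∞) F) (s : ℝ) :
    ContDiff ℝ (⊤ : ℕ∞) (fun y => F (s, y)) :=
  hF.comp (contDiff_const.prodMk contDiff_id)

end slice

end EV

set_option maxHeartbeats 4000000 in
/-- Effective velocity transformation (quantum case): with `ν > κ > 0`,
`μ = ν − √(ν²−κ²)`, `λ = √(ν²−κ²)`, if `(ρ,u)` solves the pressureless quantum system
then `w = u + μ∇log ρ` satisfies `∂_tρ + div(ρw) = μΔρ` and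
`∂_t(ρw) + div(ρw⊗w) − μΔ(ρw) − 2λdiv(ρDw) = 0`. -/
theorem effective_velocity_quantum {d : ℕ} (ν κ μ lam : ℝ)
    (hκ : 0 < κ) (hνκ : κ < ν)
    (hμ : μ = ν - Real.sqrt (ν ^ 2 - κ ^ 2)) (hlam : lam = Real.sqrt (ν ^ 2 - κ ^ 2))
    (ρ : ℝ → (Fin d → ℝ) → ℝ) (u w : ℝ → (Fin d → ℝ) → Fin d → ℝ)
    (hρ : ContDiff ℝ (⊤ : ℕ∞) fun p : ℝ × (Fin d → ℝ) => ρ p.1 p.2)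
    (hu : ∀ j, ContDiff ℝ (⊤ : ℕ∞) fun p : ℝ × (Fin d → ℝ) => u p.1 p.2 j)
    (hpos : ∀ t x, 0 < ρ t x)
    (hw : ∀ t x i, w t x i = u t x i + μ * pd i (fun y => Real.log (ρ t y)) x)
    (hcont : ∀ t x, deriv (fun s => ρ s x) t
        + ∑ i, pd i (fun y => ρ t y * u t y i) x = 0)
    (hmom : ∀ t x (j : Fin d),
        deriv (fun s => ρ s x * u s x j) t
        + ∑ i, pd i (fun y => ρ t y * u t y j * u t y i) x
        - 2 * ν * ∑ i, pd i (fun y => ρ t y *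
            ((pd i (fun z => u t z j) y + pd j (fun z => u t z i) y) / 2)) x
        = 2 * κ ^ 2 * ρ t x *
            pd j (fun y => lap (fun z => Real.sqrt (ρ t z)) y / Real.sqrt (ρ t y)) x) :
    ∀ t x,
      (deriv (fun s => ρ s x) t
        + ∑ i, pd i (fun y => ρ t y * w t y i) x = μ * lap (ρ t) x) ∧
      ∀ j : Fin d,
        deriv (fun s => ρ s x * w s x j) t
        + ∑ i, pd i (fun y => ρ t y * w t y j * w t y i) x
        - μ * lap (fun y => ρ t y * w t y j) x
        - 2 * lam * ∑ i, pd i (fun y => ρ t y *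
            ((pd i (fun z => w t z j) y + pd j (fun z => w t z i) y) / 2)) x = 0 := by
  intro t x
  -- basic facts about the coefficients
  have hν0 : 0 < ν := lt_trans hκ hνκ
  have hsq : 0 < ν ^ 2 - κ ^ 2 := by nlinarith
  have hlam2 : lam ^ 2 = ν ^ 2 - κ ^ 2 := by rw [hlam]; exact Real.sq_sqrt hsq.le
  have hνeq : ν = μ + lam := by rw [hμ, hlam]; ring
  have hκ2 : κ ^ 2 = μ ^ 2 + 2 * lam * μ := by nlinarith
  -- smoothness of slices
  have hr : ∀ s : ℝ, ContDiff ℝ (⊤ : ℕ∞) (ρ s) := fun s => EV.contDiff_slice_x hρ s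
  have hus : ∀ (s : ℝ) (k : Fin d), ContDiff ℝ (⊤ : ℕ∞) (fun y => u s y k) := fun s k =>
    EV.contDiff_slice_x (hu k) s
  have hne : ∀ s y, ρ s y ≠ 0 := fun s y => (hpos s y).ne'
  have cρ : ContDiff ℝ (⊤ : ℕ∞) (ρ t) := hr t
  have cu : ∀ k : Fin d, ContDiff ℝ (⊤ : ℕ∞) (fun y => u t y k) := fun k => hus t k
  have cP : ∀ k : Fin d, ContDiff ℝ (⊤ : ℕ∞) (pd k (ρ t)) := fun k => EV.contDiff_pd cρ k
  have cB : ∀ i k : Fin d, ContDiff ℝ (⊤ : ℕ∞) (pd i (fun y => u t y k)) := fun i k =>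
    EV.contDiff_pd (cu k) i
  have cQ : ∀ i k : Fin d, ContDiff ℝ (⊤ : ℕ∞) (pd i (pd k (ρ t))) := fun i k =>
    EV.contDiff_pd (cP k) i
  have dρ : ∀ y, DifferentiableAt ℝ (ρ t) y := fun y =>
    (cρ.differentiable (by simp)).differentiableAt
  have du : ∀ (k : Fin d) y, DifferentiableAt ℝ (fun z => u t z k) y := fun k y =>
    ((cu k).differentiable (by simp)).differentiableAt
  have dP : ∀ (k : Fin d) y, DifferentiableAt ℝ (pd k (ρ t)) y := fun k y =>
    ((cP k).differentiable (by simp)).differentiableAt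
  have dB : ∀ (i k : Fin d) y, DifferentiableAt ℝ (pd i (fun z => u t z k)) y := fun i k y =>
    ((cB i k).differentiable (by simp)).differentiableAt
  have dQ : ∀ (i k : Fin d) y, DifferentiableAt ℝ (pd i (pd k (ρ t))) y := fun i k y =>
    ((cQ i k).differentiable (by simp)).differentiableAt
  constructor
  · -- continuity equation
    have h1 : ∀ i : Fin d, pd i (fun y => ρ t y * w t y i) x
        = pd i (fun y => ρ t y * u t y i) x + μ * pd i (pd i (ρ t)) x := by
      intro i
      have hfun : (fun y => ρ t y * w t y i)
          = fun y => ρ t y * u t y i + μ * pd i (ρ t) y := by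
        funext y
        rw [hw t y i, EV.pd_log (dρ y) (hne t y)]
        field_simp [hne t y]
      rw [hfun, EV.pd_add ((dρ x).fun_mul (du i x)) ((dP i x).const_mul μ),
        EV.pd_const_mul (dP i x) μ]
    rw [Finset.sum_congr rfl (fun i _ => h1 i), Finset.sum_add_distrib, ← Finset.mul_sum]
    have hlapdef : lap (ρ t) x = ∑ i, pd i (pd i (ρ t)) x := rfl
    rw [hlapdef]
    have := hcont t x
    linarith
  · intro j
    -- pointwise rewriting of w
    have hWfun : ∀ k : Fin d, (fun z => w t z k)
        = fun z => u t z k + μ * (pd k (ρ t) z / ρ t z) := by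
      intro k; funext z
      rw [hw t z k, EV.pd_log (dρ z) (hne t z)]
    -- derivative of w components
    have hDW : ∀ (k l : Fin d) (y : Fin d → ℝ), pd k (fun z => w t z l) y
        = pd k (fun z => u t z l) y
          + μ * ((pd k (pd l (ρ t)) y * ρ t y - pd l (ρ t) y * pd k (ρ t) y) / (ρ t y) ^ 2) := by
      intro k l y
      have dQuot : DifferentiableAt ℝ (fun z => pd l (ρ t) z / ρ t z) y :=
        EV.diffAt_div (dP l y) (dρ y) (hne t y)
      rw [hWfun l,
        EV.pd_add (du l y) (dQuot.const_mul μ),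
        EV.pd_const_mul dQuot μ,
        EV.pd_div (dP l y) (dρ y) (hne t y)]
    -- time derivative piece
    have hfun_t : (fun s => ρ s x * w s x j)
        = fun s => ρ s x * u s x j + μ * pd j (ρ s) x := by
      funext s
      rw [hw s x j, EV.pd_log (((hr s).differentiable (by simp)).differentiableAt) (hne s x)]
      field_simp [hne s x]
    have dts1 : DifferentiableAt ℝ (fun s => ρ s x) t := (EV.differentiable_slice_t hρ x) t
    have dts2 : DifferentiableAt ℝ (fun s => u s x j) t :=
      (EV.differentiable_slice_t (hu j) x) t
    have dts3 : DifferentiableAt ℝ (fun s => pd j (ρ s) x) t := by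
      have hps : (fun s => pd j (ρ s) x)
          = fun s => EV.dd ((0 : ℝ), Pi.single j 1) (fun p : ℝ × (Fin d → ℝ) => ρ p.1 p.2) (s, x) :=
        funext fun s => EV.pd_slice hρ
      rw [hps]
      exact (EV.differentiable_slice_t (EV.contDiff_dd hρ _) x) t
    have hD1 : deriv (fun s => ρ s x * w s x j) t
        = deriv (fun s => ρ s x * u s x j) t + μ * deriv (fun s => pd j (ρ s) x) t := by
      rw [hfun_t, deriv_fun_add (dts1.fun_mul dts2) (dts3.const_mul μ), deriv_const_mul μ dts3]
    have hmix : deriv (fun s => pd j (ρ s) x) t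
        = pd j (fun y => deriv (fun s => ρ s y) t) x := EV.mixed_schwarz hρ t x j
    have hct : (fun y => deriv (fun s => ρ s y) t)
        = fun y => -∑ i, pd i (fun z => ρ t z * u t z i) y := by
      funext y
      have := hcont t y
      linarith
    -- E1 expansion
    have hf1 : ∀ i : Fin d, pd j (fun y => ρ t y * u t y i)
        = fun y => ρ t y * pd j (fun z => u t z i) y + u t y i * pd j (ρ t) y :=
      fun i => funext fun y => EV.pd_mul (dρ y) (du i y)
    have he1 : ∀ i : Fin d, pd j (pd i (fun y => ρ t y * u t y i)) x
        = ρ t x * pd i (pd j (fun z => u t z i)) x + pd j (fun z => u t z i) x * pd i (ρ t) x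
          + u t x i * pd i (pd j (ρ t)) x + pd j (ρ t) x * pd i (fun z => u t z i) x := by
      intro i
      rw [EV.pd_comm (cρ.mul (cu i)) j i x, hf1 i,
        EV.pd_add ((dρ x).fun_mul (dB j i x)) ((du i x).fun_mul (dP j x)),
        EV.pd_mul (dρ x) (dB j i x), EV.pd_mul (du i x) (dP j x)]
      ring
    have csum : ContDiff ℝ (⊤ : ℕ∞) (fun y => ∑ i, pd i (fun z => ρ t z * u t z i) y) :=
      ContDiff.sum fun i _ => EV.contDiff_pd (cρ.mul (cu i)) i
    have hPt : pd j (fun y => deriv (fun s => ρ s y) t) x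
        = -∑ i, (ρ t x * pd i (pd j (fun z => u t z i)) x
            + pd j (fun z => u t z i) x * pd i (ρ t) x
            + u t x i * pd i (pd j (ρ t)) x + pd j (ρ t) x * pd i (fun z => u t z i) x) := by
      rw [hct, EV.pd_neg ((csum.differentiable (by simp)).differentiableAt),
        EV.pd_sum (fun l =>
          ((EV.contDiff_pd (cρ.mul (cu l)) l).differentiable (by simp)).differentiableAt)]
      exact congrArg Neg.neg (Finset.sum_congr rfl fun i _ => he1 i)
    -- E2 expansion
    have h2fun : ∀ i : Fin d, (fun y => ρ t y * w t y j * w t y i)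
        = fun y => ρ t y * u t y j * u t y i + μ * (u t y j * pd i (ρ t) y)
            + μ * (u t y i * pd j (ρ t) y)
            + μ ^ 2 * (pd j (ρ t) y * pd i (ρ t) y / ρ t y) := by
      intro i; funext y
      rw [hw t y j, hw t y i, EV.pd_log (dρ y) (hne t y), EV.pd_log (dρ y) (hne t y)]
      field_simp [hne t y]
      ring
    have he2 : ∀ i : Fin d, pd i (fun y => ρ t y * w t y j * w t y i) x
        = ρ t x * u t x j * pd i (fun z => u t z i) x
            + u t x i * (ρ t x * pd i (fun z => u t z j) x + u t x j * pd i (ρ t) x)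
          + μ * (u t x j * pd i (pd i (ρ t)) x + pd i (ρ t) x * pd i (fun z => u t z j) x)
          + μ * (u t x i * pd i (pd j (ρ t)) x + pd j (ρ t) x * pd i (fun z => u t z i) x)
          + μ ^ 2 * (((pd j (ρ t) x * pd i (pd i (ρ t)) x + pd i (ρ t) x * pd i (pd j (ρ t)) x)
              * ρ t x - pd j (ρ t) x * pd i (ρ t) x * pd i (ρ t) x) / (ρ t x) ^ 2) := by
      intro i
      have dT1 : DifferentiableAt ℝ (fun y => ρ t y * u t y j * u t y i) x :=
        ((dρ x).fun_mul (du j x)).fun_mul (du i x)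
      have dT2in : DifferentiableAt ℝ (fun y => u t y j * pd i (ρ t) y) x :=
        (du j x).fun_mul (dP i x)
      have dT3in : DifferentiableAt ℝ (fun y => u t y i * pd j (ρ t) y) x :=
        (du i x).fun_mul (dP j x)
      have dPPm : DifferentiableAt ℝ (fun y => pd j (ρ t) y * pd i (ρ t) y) x :=
        (dP j x).fun_mul (dP i x)
      have dT4in : DifferentiableAt ℝ (fun y => pd j (ρ t) y * pd i (ρ t) y / ρ t y) x :=
        EV.diffAt_div dPPm (dρ x) (hne t x)
      rw [h2fun i,
        EV.pd_add ((dT1.fun_add (dT2in.const_mul μ)).fun_add (dT3in.const_mul μ)) (dT4in.const_mul (μ ^ 2)),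
        EV.pd_add (dT1.fun_add (dT2in.const_mul μ)) (dT3in.const_mul μ),
        EV.pd_add dT1 (dT2in.const_mul μ),
        EV.pd_mul ((dρ x).fun_mul (du j x)) (du i x), EV.pd_mul (dρ x) (du j x),
        EV.pd_const_mul dT2in μ, EV.pd_mul (du j x) (dP i x),
        EV.pd_const_mul dT3in μ, EV.pd_mul (du i x) (dP j x),
        EV.pd_const_mul dT4in (μ ^ 2), EV.pd_div ((dP j x).fun_mul (dP i x)) (dρ x) (hne t x),
        EV.pd_mul (dP j x) (dP i x)]
    -- E3 expansion (laplacian term)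
    have hrwj : (fun y => ρ t y * w t y j) = fun y => ρ t y * u t y j + μ * pd j (ρ t) y := by
      funext y
      rw [hw t y j, EV.pd_log (dρ y) (hne t y)]
      field_simp [hne t y]
    have hinner : ∀ i : Fin d, pd i (fun y => ρ t y * u t y j + μ * pd j (ρ t) y)
        = fun y => (ρ t y * pd i (fun z => u t z j) y + u t y j * pd i (ρ t) y)
            + μ * pd i (pd j (ρ t)) y := by
      intro i; funext y
      rw [EV.pd_add ((dρ y).fun_mul (du j y)) ((dP j y).const_mul μ),
        EV.pd_mul (dρ y) (du j y), EV.pd_const_mul (dP j y) μ]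
    have he3 : ∀ i : Fin d, pd i (pd i (fun y => ρ t y * w t y j)) x
        = ρ t x * pd i (pd i (fun z => u t z j)) x + pd i (fun z => u t z j) x * pd i (ρ t) x
          + (u t x j * pd i (pd i (ρ t)) x + pd i (ρ t) x * pd i (fun z => u t z j) x)
          + μ * pd i (pd i (pd j (ρ t))) x := by
      intro i
      rw [hrwj, hinner i,
        EV.pd_add (((dρ x).fun_mul (dB i j x)).fun_add ((du j x).fun_mul (dP i x))) ((dQ i j x).const_mul μ),
        EV.pd_add ((dρ x).fun_mul (dB i j x)) ((du j x).fun_mul (dP i x)),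
        EV.pd_mul (dρ x) (dB i j x), EV.pd_mul (du j x) (dP i x),
        EV.pd_const_mul (dQ i j x) μ]
    have hlapE : lap (fun y => ρ t y * w t y j) x
        = ∑ i, (ρ t x * pd i (pd i (fun z => u t z j)) x
            + pd i (fun z => u t z j) x * pd i (ρ t) x
            + (u t x j * pd i (pd i (ρ t)) x + pd i (ρ t) x * pd i (fun z => u t z j) x)
            + μ * pd i (pd i (pd j (ρ t))) x) := by
      rw [show lap (fun y => ρ t y * w t y j) x
          = ∑ i, pd i (pd i (fun y => ρ t y * w t y j)) x from rfl]
      exact Finset.sum_congr rfl fun i _ => he3 i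
    -- E4 expansion
    have h4fun : ∀ i : Fin d,
        (fun y => ρ t y * ((pd i (fun z => w t z j) y + pd j (fun z => w t z i) y) / 2))
        = fun y => (1/2) * (ρ t y * (pd i (fun z => u t z j) y + pd j (fun z => u t z i) y))
            + μ * pd i (pd j (ρ t)) y - μ * (pd j (ρ t) y * pd i (ρ t) y / ρ t y) := by
      intro i; funext y
      rw [hDW i j y, hDW j i y, EV.pd_comm cρ j i y]
      field_simp [hne t y]
      ring
    have he4 : ∀ i : Fin d,
        pd i (fun y => ρ t y * ((pd i (fun z => w t z j) y + pd j (fun z => w t z i) y) / 2)) x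
        = (1/2) * (ρ t x * (pd i (pd i (fun z => u t z j)) x + pd i (pd j (fun z => u t z i)) x)
            + (pd i (fun z => u t z j) x + pd j (fun z => u t z i) x) * pd i (ρ t) x)
          + μ * pd i (pd i (pd j (ρ t))) x
          - μ * (((pd j (ρ t) x * pd i (pd i (ρ t)) x + pd i (ρ t) x * pd i (pd j (ρ t)) x)
              * ρ t x - pd j (ρ t) x * pd i (ρ t) x * pd i (ρ t) x) / (ρ t x) ^ 2) := by
      intro i
      have dG1 : DifferentiableAt ℝ
          (fun y => ρ t y * (pd i (fun z => u t z j) y + pd j (fun z => u t z i) y)) x :=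
        (dρ x).fun_mul ((dB i j x).fun_add (dB j i x))
      have dPP : DifferentiableAt ℝ (fun y => pd j (ρ t) y * pd i (ρ t) y) x :=
        (dP j x).fun_mul (dP i x)
      have dPPd : DifferentiableAt ℝ (fun y => pd j (ρ t) y * pd i (ρ t) y / ρ t y) x :=
        EV.diffAt_div dPP (dρ x) (hne t x)
      rw [h4fun i,
        EV.pd_sub ((dG1.const_mul (1/2)).fun_add ((dQ i j x).const_mul μ))
          (dPPd.const_mul μ),
        EV.pd_add (dG1.const_mul (1/2)) ((dQ i j x).const_mul μ),
        EV.pd_const_mul dG1 (1/2),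
        EV.pd_mul (dρ x) ((dB i j x).fun_add (dB j i x)),
        EV.pd_add (dB i j x) (dB j i x),
        EV.pd_const_mul (dQ i j x) μ,
        EV.pd_const_mul dPPd μ,
        EV.pd_div dPP (dρ x) (hne t x),
        EV.pd_mul (dP j x) (dP i x)]
    -- E5 expansion
    have he5 : ∀ i : Fin d,
        pd i (fun y => ρ t y * ((pd i (fun z => u t z j) y + pd j (fun z => u t z i) y) / 2)) x
        = (1/2) * (ρ t x * (pd i (pd i (fun z => u t z j)) x + pd i (pd j (fun z => u t z i)) x)
            + (pd i (fun z => u t z j) x + pd j (fun z => u t z i) x) * pd i (ρ t) x) := by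
      intro i
      have dG1 : DifferentiableAt ℝ
          (fun y => ρ t y * (pd i (fun z => u t z j) y + pd j (fun z => u t z i) y)) x :=
        (dρ x).fun_mul ((dB i j x).fun_add (dB j i x))
      have h5fun : (fun y => ρ t y * ((pd i (fun z => u t z j) y + pd j (fun z => u t z i) y) / 2))
          = fun y => (1/2) * (ρ t y * (pd i (fun z => u t z j) y + pd j (fun z => u t z i) y)) := by
        funext y; ring
      rw [h5fun, EV.pd_const_mul dG1 (1/2), EV.pd_mul (dρ x) ((dB i j x).fun_add (dB j i x)),
        EV.pd_add (dB i j x) (dB j i x)]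
    -- t1 expansion (transport term of hmom)
    have ht1 : ∀ i : Fin d, pd i (fun y => ρ t y * u t y j * u t y i) x
        = ρ t x * u t x j * pd i (fun z => u t z i) x
          + u t x i * (ρ t x * pd i (fun z => u t z j) x + u t x j * pd i (ρ t) x) := by
      intro i
      rw [EV.pd_mul ((dρ x).fun_mul (du j x)) (du i x), EV.pd_mul (dρ x) (du j x)]
        -- Bohm identity block
    have hsqrt0 : ∀ y, Real.sqrt (ρ t y) ≠ 0 := fun y => (Real.sqrt_pos.2 (hpos t y)).ne'
    have csf : ContDiff ℝ (⊤ : ℕ∞) (fun z => Real.sqrt (ρ t z)) := cρ.sqrt (hne t)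
    have dsf : ∀ y, DifferentiableAt ℝ (fun z => Real.sqrt (ρ t z)) y := fun y =>
      (csf.differentiable (by simp)).differentiableAt
    have hsf1 : ∀ i : Fin d, pd i (fun z => Real.sqrt (ρ t z))
        = fun y => pd i (ρ t) y / (2 * Real.sqrt (ρ t y)) :=
      fun i => funext fun y => EV.pd_sqrt (dρ y) (hne t y)
    have d2s : ∀ y, DifferentiableAt ℝ (fun z => 2 * Real.sqrt (ρ t z)) y := fun y =>
      (dsf y).const_mul 2
    have h2s0 : ∀ y, (2 : ℝ) * Real.sqrt (ρ t y) ≠ 0 := fun y =>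
      mul_ne_zero two_ne_zero (hsqrt0 y)
    have hsf2 : ∀ (i : Fin d) (y : Fin d → ℝ), pd i (pd i (fun z => Real.sqrt (ρ t z))) y
        = (pd i (pd i (ρ t)) y * (2 * Real.sqrt (ρ t y))
            - pd i (ρ t) y * (2 * (pd i (ρ t) y / (2 * Real.sqrt (ρ t y)))))
            / (2 * Real.sqrt (ρ t y)) ^ 2 := by
      intro i y
      rw [hsf1 i, EV.pd_div (dP i y) (d2s y) (h2s0 y), EV.pd_const_mul (dsf y) 2,
        EV.pd_sqrt (dρ y) (hne t y)]
    have HB : (fun y => lap (fun z => Real.sqrt (ρ t z)) y / Real.sqrt (ρ t y))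
        = fun y => lap (ρ t) y / (2 * ρ t y)
            - (∑ i, pd i (ρ t) y * pd i (ρ t) y) / (4 * (ρ t y * ρ t y)) := by
      funext y
      rw [show lap (fun z => Real.sqrt (ρ t z)) y
            = ∑ i, pd i (pd i (fun z => Real.sqrt (ρ t z))) y from rfl,
        Finset.sum_congr rfl (fun i _ => hsf2 i y),
        show lap (ρ t) y = ∑ i, pd i (pd i (ρ t)) y from rfl,
        Finset.sum_div, Finset.sum_div, Finset.sum_div, ← Finset.sum_sub_distrib]
      refine Finset.sum_congr rfl fun i _ => ?_
      set sq := Real.sqrt (ρ t y) with hsqdef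
      have hsq2 : sq ^ 2 = ρ t y := Real.sq_sqrt (hpos t y).le
      have hsq0 : sq ≠ 0 := by rw [hsqdef]; exact hsqrt0 y
      rw [← hsq2]
      field_simp
      ring
    -- spatial derivative of the Bohm quotient
    have clap : ContDiff ℝ (⊤ : ℕ∞) (lap (ρ t)) := by
      rw [show lap (ρ t) = fun y => ∑ i, pd i (pd i (ρ t)) y from rfl]
      exact ContDiff.sum fun i _ => cQ i i
    have dlap : ∀ y, DifferentiableAt ℝ (lap (ρ t)) y := fun y =>
      (clap.differentiable (by simp)).differentiableAt
    have hpdlap : pd j (lap (ρ t)) x = ∑ i, pd i (pd i (pd j (ρ t))) x := by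
      rw [show lap (ρ t) = fun y => ∑ i, pd i (pd i (ρ t)) y from rfl,
        EV.pd_sum (fun l => dQ l l x)]
      refine Finset.sum_congr rfl fun i _ => ?_
      rw [EV.pd_comm (cP i) j i x,
        show pd j (pd i (ρ t)) = pd i (pd j (ρ t)) from funext fun y => EV.pd_comm cρ j i y]
    have csumPP : ContDiff ℝ (⊤ : ℕ∞) (fun y => ∑ i, pd i (ρ t) y * pd i (ρ t) y) :=
      ContDiff.sum fun i _ => (cP i).mul (cP i)
    have dsumPP : ∀ y, DifferentiableAt ℝ (fun y' => ∑ i, pd i (ρ t) y' * pd i (ρ t) y') y :=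
      fun y => (csumPP.differentiable (by simp)).differentiableAt
    have hpdPP : pd j (fun y => ∑ i, pd i (ρ t) y * pd i (ρ t) y) x
        = ∑ i, (pd i (ρ t) x * pd i (pd j (ρ t)) x + pd i (ρ t) x * pd i (pd j (ρ t)) x) := by
      rw [EV.pd_sum (fun l => ((cP l).mul (cP l)).differentiable (by simp) |>.differentiableAt)]
      refine Finset.sum_congr rfl fun i _ => ?_
      rw [EV.pd_mul (dP i x) (dP i x), EV.pd_comm cρ j i x]
    have dden1 : DifferentiableAt ℝ (fun y => 2 * ρ t y) x := (dρ x).const_mul 2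
    have dden2 : DifferentiableAt ℝ (fun y => 4 * (ρ t y * ρ t y)) x :=
      ((dρ x).fun_mul (dρ x)).const_mul 4
    have hden1 : (2 : ℝ) * ρ t x ≠ 0 := mul_ne_zero two_ne_zero (hne t x)
    have hden2 : (4 : ℝ) * (ρ t x * ρ t x) ≠ 0 :=
      mul_ne_zero four_ne_zero (mul_ne_zero (hne t x) (hne t x))
    have dF1 : DifferentiableAt ℝ (fun y => lap (ρ t) y / (2 * ρ t y)) x :=
      EV.diffAt_div (dlap x) dden1 hden1
    have dF2 : DifferentiableAt ℝ
        (fun y => (∑ i, pd i (ρ t) y * pd i (ρ t) y) / (4 * (ρ t y * ρ t y))) x :=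
      EV.diffAt_div (dsumPP x) dden2 hden2
    have hE6 : 2 * κ ^ 2 * ρ t x
          * pd j (fun y => lap (fun z => Real.sqrt (ρ t z)) y / Real.sqrt (ρ t y)) x
        = ∑ i, κ ^ 2 * (pd i (pd i (pd j (ρ t))) x
            - (pd j (ρ t) x * pd i (pd i (ρ t)) x + pd i (ρ t) x * pd i (pd j (ρ t)) x) / ρ t x
            + pd i (ρ t) x * pd i (ρ t) x * pd j (ρ t) x / (ρ t x) ^ 2) := by
      rw [HB, EV.pd_sub dF1 dF2,
        EV.pd_div (dlap x) dden1 hden1,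
        EV.pd_div (dsumPP x) dden2 hden2,
        EV.pd_const_mul (dρ x) 2,
        EV.pd_const_mul ((dρ x).fun_mul (dρ x)) 4,
        EV.pd_mul (dρ x) (dρ x),
        hpdlap, hpdPP,
        show lap (ρ t) x = ∑ i, pd i (pd i (ρ t)) x from rfl]
      have hsplit : ∀ i ∈ (Finset.univ : Finset (Fin d)),
          κ ^ 2 * (pd i (pd i (pd j (ρ t))) x
            - (pd j (ρ t) x * pd i (pd i (ρ t)) x + pd i (ρ t) x * pd i (pd j (ρ t)) x) / ρ t x
            + pd i (ρ t) x * pd i (ρ t) x * pd j (ρ t) x / (ρ t x) ^ 2)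
          = κ ^ 2 * pd i (pd i (pd j (ρ t))) x
            - κ ^ 2 * pd j (ρ t) x / ρ t x * pd i (pd i (ρ t)) x
            - κ ^ 2 / ρ t x * (pd i (ρ t) x * pd i (pd j (ρ t)) x)
            + κ ^ 2 * pd j (ρ t) x / (ρ t x) ^ 2 * (pd i (ρ t) x * pd i (ρ t) x) := by
        intro i _
        field_simp
        ring
      rw [Finset.sum_congr rfl hsplit]
      simp only [Finset.sum_add_distrib, Finset.sum_sub_distrib, ← Finset.mul_sum]
      field_simp [hne t x]
      ring
        -- assemble everything
    have hm := hmom t x j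
    rw [Finset.sum_congr rfl (fun i _ => ht1 i), Finset.sum_congr rfl (fun i _ => he5 i),
      hE6] at hm
    rw [hD1, hmix, hPt, hlapE,
      Finset.sum_congr rfl (fun i _ => he2 i),
      Finset.sum_congr rfl (fun i _ => he4 i)]
    have hper : ∀ i ∈ (Finset.univ : Finset (Fin d)),
        (ρ t x * u t x j * pd i (fun z => u t z i) x
            + u t x i * (ρ t x * pd i (fun z => u t z j) x + u t x j * pd i (ρ t) x)
          + μ * (u t x j * pd i (pd i (ρ t)) x + pd i (ρ t) x * pd i (fun z => u t z j) x)
          + μ * (u t x i * pd i (pd j (ρ t)) x + pd j (ρ t) x * pd i (fun z => u t z i) x)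
          + μ ^ 2 * (((pd j (ρ t) x * pd i (pd i (ρ t)) x + pd i (ρ t) x * pd i (pd j (ρ t)) x)
              * ρ t x - pd j (ρ t) x * pd i (ρ t) x * pd i (ρ t) x) / (ρ t x) ^ 2))
        - μ * (ρ t x * pd i (pd j (fun z => u t z i)) x
            + pd j (fun z => u t z i) x * pd i (ρ t) x
            + u t x i * pd i (pd j (ρ t)) x + pd j (ρ t) x * pd i (fun z => u t z i) x)
        - μ * (ρ t x * pd i (pd i (fun z => u t z j)) x
            + pd i (fun z => u t z j) x * pd i (ρ t) x
            + (u t x j * pd i (pd i (ρ t)) x + pd i (ρ t) x * pd i (fun z => u t z j) x)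
            + μ * pd i (pd i (pd j (ρ t))) x)
        - 2 * lam * ((1/2) * (ρ t x * (pd i (pd i (fun z => u t z j)) x
              + pd i (pd j (fun z => u t z i)) x)
            + (pd i (fun z => u t z j) x + pd j (fun z => u t z i) x) * pd i (ρ t) x)
          + μ * pd i (pd i (pd j (ρ t))) x
          - μ * (((pd j (ρ t) x * pd i (pd i (ρ t)) x + pd i (ρ t) x * pd i (pd j (ρ t)) x)
              * ρ t x - pd j (ρ t) x * pd i (ρ t) x * pd i (ρ t) x) / (ρ t x) ^ 2))
        - (ρ t x * u t x j * pd i (fun z => u t z i) x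
            + u t x i * (ρ t x * pd i (fun z => u t z j) x + u t x j * pd i (ρ t) x))
        + 2 * ν * ((1/2) * (ρ t x * (pd i (pd i (fun z => u t z j)) x
              + pd i (pd j (fun z => u t z i)) x)
            + (pd i (fun z => u t z j) x + pd j (fun z => u t z i) x) * pd i (ρ t) x))
        + κ ^ 2 * (pd i (pd i (pd j (ρ t))) x
            - (pd j (ρ t) x * pd i (pd i (ρ t)) x + pd i (ρ t) x * pd i (pd j (ρ t)) x) / ρ t x
            + pd i (ρ t) x * pd i (ρ t) x * pd j (ρ t) x / (ρ t x) ^ 2) = 0 := by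
      intro i _
      rw [hκ2, hνeq]
      field_simp [hne t x]
      ring
    have hkey : (∑ i, (ρ t x * u t x j * pd i (fun z => u t z i) x
            + u t x i * (ρ t x * pd i (fun z => u t z j) x + u t x j * pd i (ρ t) x)
          + μ * (u t x j * pd i (pd i (ρ t)) x + pd i (ρ t) x * pd i (fun z => u t z j) x)
          + μ * (u t x i * pd i (pd j (ρ t)) x + pd j (ρ t) x * pd i (fun z => u t z i) x)
          + μ ^ 2 * (((pd j (ρ t) x * pd i (pd i (ρ t)) x + pd i (ρ t) x * pd i (pd j (ρ t)) x)
              * ρ t x - pd j (ρ t) x * pd i (ρ t) x * pd i (ρ t) x) / (ρ t x) ^ 2)))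
        - μ * (∑ i, (ρ t x * pd i (pd j (fun z => u t z i)) x
            + pd j (fun z => u t z i) x * pd i (ρ t) x
            + u t x i * pd i (pd j (ρ t)) x + pd j (ρ t) x * pd i (fun z => u t z i) x))
        - μ * (∑ i, (ρ t x * pd i (pd i (fun z => u t z j)) x
            + pd i (fun z => u t z j) x * pd i (ρ t) x
            + (u t x j * pd i (pd i (ρ t)) x + pd i (ρ t) x * pd i (fun z => u t z j) x)
            + μ * pd i (pd i (pd j (ρ t))) x))
        - 2 * lam * (∑ i, ((1/2) * (ρ t x * (pd i (pd i (fun z => u t z j)) x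
              + pd i (pd j (fun z => u t z i)) x)
            + (pd i (fun z => u t z j) x + pd j (fun z => u t z i) x) * pd i (ρ t) x)
          + μ * pd i (pd i (pd j (ρ t))) x
          - μ * (((pd j (ρ t) x * pd i (pd i (ρ t)) x + pd i (ρ t) x * pd i (pd j (ρ t)) x)
              * ρ t x - pd j (ρ t) x * pd i (ρ t) x * pd i (ρ t) x) / (ρ t x) ^ 2)))
        - (∑ i, (ρ t x * u t x j * pd i (fun z => u t z i) x
            + u t x i * (ρ t x * pd i (fun z => u t z j) x + u t x j * pd i (ρ t) x)))
        + 2 * ν * (∑ i, ((1/2) * (ρ t x * (pd i (pd i (fun z => u t z j)) x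
              + pd i (pd j (fun z => u t z i)) x)
            + (pd i (fun z => u t z j) x + pd j (fun z => u t z i) x) * pd i (ρ t) x)))
        + (∑ i, κ ^ 2 * (pd i (pd i (pd j (ρ t))) x
            - (pd j (ρ t) x * pd i (pd i (ρ t)) x + pd i (ρ t) x * pd i (pd j (ρ t)) x) / ρ t x
            + pd i (ρ t) x * pd i (ρ t) x * pd j (ρ t) x / (ρ t x) ^ 2)) = 0 := by
      rw [Finset.mul_sum, Finset.mul_sum, Finset.mul_sum, Finset.mul_sum,
        ← Finset.sum_sub_distrib, ← Finset.sum_sub_distrib, ← Finset.sum_sub_distrib,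
        ← Finset.sum_sub_distrib, ← Finset.sum_add_distrib, ← Finset.sum_add_distrib]
      exact Finset.sum_eq_zero hper
    linear_combination hm + hkey
end
end
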